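/- arXiv:2106.09254 — 6 statements merged into one kernel-verified Lean document; each statement's English description precedes it below -/
import Mathlib

section
/- Let m,ℓ ≥ 1 and λ = (λ_1,…,λ_m) ∈ P_{m,ℓ}. Then the projection π (applied to underlying cell sets) induces a bijection from the disjoint union ⨆_{i=0}^∞ L_λ((1,λ_1−i),(m,λ_1−ℓ−i)) onto the set L̂_λ of non-intersecting loops contained in λ̂, with inverse p ↦ π^{−1}(p) ∩ λ̄. -/
open scoped BigOperators

/-- A cell of the plane `ℤ²`. -/
abbrev Cell : Type := ℤ × ℤ

/-- The partial order `⊴` on `ℤ²`: `(a,b) ⊴ (a',b')` iff `a ≥ a'` and `b ≥ b'`. -/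
def cellLE (u v : Cell) : Prop := v.1 ≤ u.1 ∧ v.2 ≤ u.2

/-- The cylinder `C_ω = ℤ²/ℤω`. -/
abbrev Cyl (ω : Cell) : Type := Cell ⧸ AddSubgroup.zmultiples ω

/-- The natural projection `π : ℤ² → C_ω`. -/
def pr (ω : Cell) : Cell → Cyl ω := QuotientAddGroup.mk

/-- The induced relation `⊴` on the cylinder: `x ⊴ y` iff some lifts satisfy `x̃ ⊴ ỹ`. -/
def cylLE (ω : Cell) (x y : Cyl ω) : Prop :=
  ∃ u v : Cell, pr ω u = x ∧ pr ω v = y ∧ cellLE u v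

/-- The hook of `x` in a diagram `Θ ⊆ ℤ²`. -/
def hookSet (Θ : Set Cell) (x : Cell) : Set Cell :=
  Θ ∩ ({y | ∃ k : ℤ, 0 ≤ k ∧ y = x + (k, 0)} ∪ {y | ∃ k : ℤ, 1 ≤ k ∧ y = x + (0, k)})

/-- The hook length of `x` in `Θ`. -/
noncomputable def hookLen (Θ : Set Cell) (x : Cell) : ℕ := (hookSet Θ x).ncard

/-- The hook length of a cell of the cylinder, computed via a lift. -/
noncomputable def cylHook (ω : Cell) (Θ : Set Cell) (x : Cyl ω) : ℕ :=
  hookLen Θ (Quotient.out x)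

/-- The `ℤω`-orbit of a cell. -/
def zline (ω y : Cell) : Set Cell := {z | ∃ k : ℤ, z = y + k • ω}

/-- `S + ℤω`. -/
def perClosure (ω : Cell) (S : Set Cell) : Set Cell := {z | ∃ y ∈ S, ∃ k : ℤ, z = y + k • ω}

/-- Translation of a set of cells by `u`. -/
def shiftSet (u : Cell) (S : Set Cell) : Set Cell := (· + u) '' S

/-- The semi-infinite diagram `λ̄ = {(a,b) : 1 ≤ a ≤ m, b ≤ λ_a}`. -/
def lowerDiag (m : ℤ) (lam : ℤ → ℤ) : Set Cell := {p | 1 ≤ p.1 ∧ p.1 ≤ m ∧ p.2 ≤ lam p.1}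

/-- The Young diagram `{(a,b) : 1 ≤ a ≤ m, 1 ≤ b ≤ λ_a}`. -/
def youngDiag (m : ℤ) (lam : ℤ → ℤ) : Set Cell :=
  {p | 1 ≤ p.1 ∧ p.1 ≤ m ∧ 1 ≤ p.2 ∧ p.2 ≤ lam p.1}

/-- The skew diagram `λ/μ = {(a,b) : 1 ≤ a ≤ m, μ_a < b ≤ λ_a}`. -/
def skewDiag (m : ℤ) (lam mu : ℤ → ℤ) : Set Cell :=
  {p | 1 ≤ p.1 ∧ p.1 ≤ m ∧ mu p.1 < p.2 ∧ p.2 ≤ lam p.1}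

/-- The periodic diagram `λ̃ = λ̄ + ℤ(m,−ℓ)`. -/
def perDiag (m l : ℤ) (lam : ℤ → ℤ) : Set Cell := perClosure (m, -l) (lowerDiag m lam)

/-- The cylindric diagram `λ̂ = π(λ̃)`. -/
def cylDiag (m l : ℤ) (lam : ℤ → ℤ) : Set (Cyl (m, -l)) := pr (m, -l) '' perDiag m l lam

/-- `λ ∈ P_{m,ℓ}`: an `ℓ`-restricted generalized partition of length `m`
(only the values `λ_1, …, λ_m` are relevant). -/
def IsRestricted (m l : ℤ) (lam : ℤ → ℤ) : Prop :=
  (∀ a : ℤ, 1 ≤ a → a < m → lam (a + 1) ≤ lam a) ∧ lam 1 - lam m ≤ l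

/-- `y` is a `D`-active cell (with ambient diagram `Θ`). -/
def IsActive (Θ D : Set Cell) (y : Cell) : Prop :=
  y ∈ D ∧ y + (1, 0) ∈ Θ \ D ∧ y + (0, 1) ∈ Θ \ D ∧ y + (1, 1) ∈ Θ \ D

/-- One elementary excitation inside `Θ`. -/
def exciteStep (Θ D E : Set Cell) : Prop :=
  ∃ y, IsActive Θ D y ∧ E = (D \ {y}) ∪ {y + (1, 1)}

/-- The excited diagrams of `M` in `Θ`. -/
def ExcitedSet (Θ M : Set Cell) : Set (Set Cell) :=
  {D | Relation.ReflTransGen (exciteStep Θ) M D}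

/-- One periodic elementary excitation inside `Θ`. -/
def pExciteStep (ω : Cell) (Θ D E : Set Cell) : Prop :=
  ∃ y, IsActive Θ D y ∧ E = (D \ zline ω y) ∪ zline ω (y + (1, 1))

/-- The periodic excited diagrams of `M` in `Θ`. -/
def PExcitedSet (ω : Cell) (Θ M : Set Cell) : Set (Set Cell) :=
  {D | Relation.ReflTransGen (pExciteStep ω Θ) M D}

/-- The cylindric excited diagrams: images under `π` of the periodic excited diagrams. -/
def CylExcitedSet (ω : Cell) (Θ M : Set Cell) : Set (Set (Cyl ω)) :=
  (fun D => pr ω '' D) '' PExcitedSet ω Θ M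

/-- A linear extension of `S` (with respect to a relation `R`): a bijection
`ε : S → {1,…,n}` with `ε x < ε y` whenever `R x y` and `x ≠ y`. -/
def IsLinExt {α : Type} (R : α → α → Prop) (S : Set α) (n : ℕ) (ε : S → Fin n) : Prop :=
  Function.Bijective ε ∧ ∀ x y : S, R (x : α) (y : α) → (x : α) ≠ (y : α) → ε x < ε y

/-- The number of linear extensions of `S`. -/
noncomputable def linExtCount {α : Type} (R : α → α → Prop) (S : Set α) (n : ℕ) : ℕ :=
  Nat.card {ε : S → Fin n // IsLinExt R S n ε}

/-- A reverse standard tableau on a (skew) diagram `S` of `n` cells. -/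
def IsRST (S : Set Cell) (n : ℕ) (ε : S → Fin n) : Prop :=
  Function.Bijective ε ∧
    (∀ x y : S, (y : Cell) = (x : Cell) + (0, 1) → ε y < ε x) ∧
    (∀ x y : S, (y : Cell) = (x : Cell) + (1, 0) → ε y < ε x)

/-- An `ℓ`-restricted reverse standard tableau on a skew diagram of length `m`. -/
def IsRSTl (m l : ℤ) (S : Set Cell) (n : ℕ) (ε : S → Fin n) : Prop :=
  IsRST S n ε ∧
    ∀ x y : S, (x : Cell).1 = 1 → (y : Cell) = (m, (x : Cell).2 - l) → ε x < ε y

/-- One lattice step: right by `(1,0)` or down by `(0,−1)`. -/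
def stepRel (a b : Cell) : Prop := b - a = (1, 0) ∨ b - a = (0, -1)

/-- `p` is (the list of cells of) a lattice path from `u` to `v`. -/
def IsLatticePathList (u v : Cell) (p : List Cell) : Prop :=
  p.head? = some u ∧ p.getLast? = some v ∧ p.Chain' stepRel

/-- `L(u,v)`: lattice paths from `u` to `v`, identified with their underlying sets of cells. -/
def LPath (u v : Cell) : Set (Set Cell) :=
  {S | ∃ p : List Cell, IsLatticePathList u v p ∧ S = {x | x ∈ p}}

/-- `L_Θ(u,v)`: lattice paths from `u` to `v` contained in `Θ`. -/
def LPathIn (Θ : Set Cell) (u v : Cell) : Set (Set Cell) := {S | S ∈ LPath u v ∧ S ⊆ Θ}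

/-- One lattice step on the cylinder. -/
def cylStep (ω : Cell) (x y : Cyl ω) : Prop :=
  ∃ u v : Cell, pr ω u = x ∧ pr ω v = y ∧ stepRel u v

/-- `S` is a non-intersecting loop of length `n` in the cylinder. -/
def IsNILoop (ω : Cell) (n : ℕ) (S : Set (Cyl ω)) : Prop :=
  ∃ u : ZMod n → Cyl ω, Function.Injective u ∧ S = Set.range u ∧
    ∀ i : ZMod n, cylStep ω (u i) (u (i + 1))

/-- `h^{s,t}_{m,ℓ}(x) = ℓ+m−a−b+dt+s+1` where `x = (a, b−dℓ)` with `2 ≤ b ≤ ℓ+1`, `d ≥ 0`. -/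
def hst (m l s t : ℤ) (x : Cell) : ℤ :=
  l + m - x.1 - x.2 + ((l + 1 - x.2) / l) * (t - l) + s + 1

/-- The hook lengths `h_i` of the bar case: `h_{ℓt+j} = (ℓ+1)t+j = i + (i−1)/ℓ`. -/
def hbar (l i : ℤ) : ℤ := i + (i - 1) / l

/-!
Every lattice step raises the content `a - b` of a cell by one, and `ω = (m, -ℓ)` has content
`ℓ + m`. Hence a path from `(1, λ₁ - i)` to `(m, λ₁ - ℓ - i)` has `ℓ + m` cells and its last cell
steps onto the `ω`-translate of its first; since `π` is injective on the strip `1 ≤ a ≤ m`, which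
contains `λ̄`, its image is a loop. Conversely, lift a loop cell by cell to `λ̄`: each step of the
loop becomes either a lattice step (content `+1`) or a wrap from column `m` to column `1`
(content `+1 - (ℓ + m)`). The content returns to its value after one turn, so there is exactly one
wrap, and cutting the loop there yields the lattice path.
-/

open Function Set

def content (x : Cell) : ℤ := x.1 - x.2

lemma content_add (x y : Cell) : content (x + y) = content x + content y := by
  simp only [content, Prod.fst_add, Prod.snd_add]; ring

lemma content_of_stepRel {a b : Cell} (h : stepRel a b) : content b = content a + 1 := by
  have hb : b = a + (b - a) := by abel
  rw [hb, content_add]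
  rcases h with h | h <;> simp [h, content]

namespace IsLatticePathList

variable {u v : Cell} {q : List Cell}

lemma pairwise_content_lt (hq : IsLatticePathList u v q) :
    q.Pairwise (fun a b => content a < content b) :=
  List.pairwise_map.1 <| List.isChain_iff_pairwise.1 <|
    List.isChain_map_of_isChain content (fun _ _ h => by simp [content_of_stepRel h]) hq.2.2

lemma nodup (hq : IsLatticePathList u v q) : q.Nodup :=
  hq.pairwise_content_lt.imp fun h => ne_of_apply_ne content h.ne

lemma content_le (hq : IsLatticePathList u v q) {x : Cell} (hx : x ∈ q) :
    content u ≤ content x := by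
  obtain ⟨t, rfl⟩ := List.head?_eq_some_iff.1 hq.1
  rcases List.mem_cons.1 hx with rfl | hx
  · exact le_rfl
  · exact (List.pairwise_cons.1 hq.pairwise_content_lt).1 x hx |>.le

lemma length_eq : ∀ {u : Cell} {q : List Cell}, IsLatticePathList u v q →
    (q.length : ℤ) = content v - content u + 1
  | _, [], ⟨h, _, _⟩ => by simp at h
  | _, [a], ⟨h, h', _⟩ => by simp_all
  | _, a :: b :: t, ⟨h, h', hc⟩ => by
    obtain ⟨hab, hc⟩ := List.isChain_cons_cons.1 hc
    have ih := length_eq (u := b) (q := b :: t) ⟨rfl, by simpa using h', hc⟩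
    obtain rfl : a = _ := Option.some.inj h
    simp only [List.length_cons, Nat.cast_add, Nat.cast_one, content_of_stepRel hab] at ih ⊢
    omega

end IsLatticePathList

lemma LPath.isLeast_content {u v : Cell} {S : Set Cell} (hS : S ∈ LPath u v) :
    IsLeast (content '' S) (content u) := by
  obtain ⟨q, hq, rfl⟩ := hS
  obtain ⟨t, rfl⟩ := List.head?_eq_some_iff.1 hq.1
  exact ⟨⟨u, List.mem_cons_self, rfl⟩, by rintro _ ⟨x, hx, rfl⟩; exact hq.content_le hx⟩

section Cylinder

variable {ω : Cell}

lemma pr_add (x y : Cell) : pr ω (x + y) = pr ω x + pr ω y := rfl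

lemma pr_add_zsmul (x : Cell) (k : ℤ) : pr ω (x + k • ω) = pr ω x := by
  rw [pr_add, add_eq_left]
  exact (QuotientAddGroup.eq_zero_iff _).2 (AddSubgroup.zsmul_mem_zmultiples ω k)

lemma injOn_pr_strip (m c : ℤ) : InjOn (pr (m, c)) {z : Cell | 1 ≤ z.1 ∧ z.1 ≤ m} := by
  intro x hx y hy h
  obtain ⟨k, hk⟩ := AddSubgroup.mem_zmultiples_iff.1 (QuotientAddGroup.eq.1 h)
  have hk1 : k * m = y.1 - x.1 := by
    have := congrArg Prod.fst hk
    simp only [Prod.smul_fst, smul_eq_mul, Prod.fst_add, Prod.fst_neg] at this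
    linarith
  have hk0 : k = 0 := by
    have := Int.eq_zero_of_abs_lt_dvd ⟨k, by rw [← hk1, mul_comm]⟩
      (abs_sub_lt_iff.2 ⟨by linarith [hx.1, hy.2], by linarith [hx.2, hy.1]⟩)
    rcases mul_eq_zero.1 (hk1.trans this) with h | h
    · exact h
    · linarith [hx.1, hx.2]
  rw [hk0, zero_smul, eq_comm, neg_add_eq_zero] at hk
  exact hk

lemma injOn_pr_lowerDiag (m c : ℤ) (lam : ℤ → ℤ) : InjOn (pr (m, c)) (lowerDiag m lam) :=
  (injOn_pr_strip m c).mono fun _ hx => by exact ⟨hx.1, hx.2.1⟩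

lemma cylDiag_eq_image_lowerDiag (m l : ℤ) (lam : ℤ → ℤ) :
    cylDiag m l lam = pr (m, -l) '' lowerDiag m lam := by
  refine Subset.antisymm ?_ (image_mono fun y hy => ⟨y, hy, 0, by simp⟩)
  rintro _ ⟨_, ⟨y, hy, k, rfl⟩, rfl⟩
  exact ⟨y, hy, (pr_add_zsmul y k).symm⟩

lemma cylStep_pr {x y : Cell} (h : cylStep ω (pr ω x) (pr ω y)) :
    pr ω y = pr ω (x + (1, 0)) ∨ pr ω y = pr ω (x + (0, -1)) := by
  obtain ⟨a, b, ha, hb, hab⟩ := h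
  have hb' : b = a + (b - a) := by abel
  rw [← hb, hb', pr_add, ha, ← pr_add]
  rcases hab with h | h <;> simp [h]

lemma stepRel_or_wrap_of_cylStep {m c : ℤ} {lam : ℤ → ℤ} {x y : Cell}
    (hx : x ∈ lowerDiag m lam) (hy : y ∈ lowerDiag m lam)
    (h : cylStep (m, c) (pr (m, c) x) (pr (m, c) y)) :
    stepRel x y ∨ y + (m, c) = x + (1, 0) := by
  obtain ⟨hx1, hxm, -⟩ := hx
  have hy' : 1 ≤ y.1 ∧ y.1 ≤ m := ⟨hy.1, hy.2.1⟩
  have hinj := injOn_pr_strip m c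
  rcases cylStep_pr h with h | h
  · rcases hxm.lt_or_eq with hxm | hxm
    · left; left
      rw [hinj hy' (by constructor <;> simp only [Prod.fst_add] <;> omega) h]
      simp
    · right
      rw [← pr_add_zsmul (x + (1, 0)) (-1)] at h
      have hmem : 1 ≤ (x + (1, 0) + (-1 : ℤ) • (m, c)).1 ∧
          (x + (1, 0) + (-1 : ℤ) • (m, c)).1 ≤ m := by
        constructor <;> simp only [Prod.fst_add, Prod.smul_fst, smul_eq_mul] <;> omega
      rw [hinj hy' hmem h]
      abel
  · left; right
    rw [hinj hy' (by constructor <;> simp only [Prod.fst_add] <;> omega) h]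
    simp

end Cylinder

section Cycles

variable {α : Type*} {R : α → α → Prop}

lemma exists_cycle_of_isChain {L : List α} {n : ℕ} {a b : α} (hn : L.length = n)
    (hR : L.IsChain R) (ha : L.head? = some a) (hb : L.getLast? = some b) (hba : R b a)
    (hnd : L.Nodup) :
    ∃ u : ZMod n → α, Injective u ∧ range u = {x | x ∈ L} ∧ ∀ i, R (u i) (u (i + 1)) := by
  subst hn
  have hne : L ≠ [] := by rintro rfl; simp at ha
  have : NeZero L.length := ⟨by simpa using hne⟩
  refine ⟨fun i => L[i.val]'i.val_lt, fun i j h => ZMod.val_injective _ (hnd.getElem_inj_iff.1 h),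
    ?_, fun i => ?_⟩
  · ext x
    simp only [mem_range, mem_ofPred_eq, List.mem_iff_getElem]
    refine ⟨fun ⟨i, hi⟩ => ⟨_, _, hi⟩, fun ⟨k, hk, hx⟩ => ⟨k, ?_⟩⟩
    simpa [ZMod.val_cast_of_lt hk] using hx
  · obtain ⟨k, hk, rfl⟩ : ∃ k < L.length, (k : ZMod L.length) = i :=
      ⟨i.val, i.val_lt, ZMod.natCast_zmod_val i⟩
    dsimp only
    rcases (Nat.succ_le_of_lt hk).lt_or_eq with hk' | hk'
    · have hval : ((k : ZMod L.length) + 1).val = k + 1 := by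
        rw [← Nat.cast_succ, ZMod.val_cast_of_lt hk']
      simpa only [ZMod.val_cast_of_lt hk, hval] using List.isChain_iff_getElem.1 hR k hk'
    · have hlast : L[k] = b := by
        rw [List.getLast?_eq_some_getLast hne, List.getLast_eq_getElem] at hb
        simpa [← hk'] using hb
      have hhead : L[0] = a := by
        rw [List.head?_eq_some_head hne, List.head_eq_getElem] at ha
        simpa using ha
      have hval : ((k : ZMod L.length) + 1).val = 0 := by
        rw [← Nat.cast_succ, hk', ZMod.natCast_self, ZMod.val_zero]
      simpa only [ZMod.val_cast_of_lt hk, hval, hlast, hhead] using hba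

variable {n : ℕ}

def cycleFrom (u : ZMod n → α) (j : ZMod n) : List α :=
  List.ofFn fun t : Fin n => u (j + (t : ℕ))

variable (u : ZMod n → α) (j : ZMod n)

lemma head?_cycleFrom [NeZero n] : (cycleFrom u j).head? = some (u j) := by
  unfold cycleFrom
  have hne : List.ofFn (fun t : Fin n => u (j + (t : ℕ))) ≠ [] := by simp [NeZero.ne n]
  rw [List.head?_eq_some_head hne, List.head_ofFn]
  simp

lemma getLast?_cycleFrom [NeZero n] : (cycleFrom u j).getLast? = some (u (j - 1)) := by
  unfold cycleFrom
  have hne : List.ofFn (fun t : Fin n => u (j + (t : ℕ))) ≠ [] := by simp [NeZero.ne n]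
  rw [List.getLast?_eq_some_getLast hne, List.getLast_ofFn]
  have : ((n - 1 : ℕ) : ZMod n) = -1 := by
    rw [Nat.cast_sub NeZero.one_le, ZMod.natCast_self, Nat.cast_one, zero_sub]
  simp [this, sub_eq_add_neg]

lemma setOf_mem_cycleFrom [NeZero n] : {x | x ∈ cycleFrom u j} = range u := by
  ext x
  simp only [cycleFrom, mem_ofPred_eq, List.mem_ofFn, mem_range]
  refine ⟨fun ⟨t, ht⟩ => ⟨_, ht⟩, fun ⟨i, hi⟩ => ⟨⟨(i - j).val, ZMod.val_lt _⟩, ?_⟩⟩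
  simp [hi]

lemma isChain_cycleFrom (h : ∀ i ≠ j - 1, R (u i) (u (i + 1))) : (cycleFrom u j).IsChain R := by
  refine List.isChain_ofFn.2 fun t ht => ?_
  have hne : j + (t : ℕ) ≠ j - 1 := by
    intro heq
    have : ((t + 1 : ℕ) : ZMod n) = 0 := by
      push_cast
      linear_combination heq
    have := congrArg ZMod.val this
    rw [ZMod.val_cast_of_lt ht, ZMod.val_zero] at this
    omega
  simpa [add_assoc] using h _ hne

/-- The increments of `f` around the cycle sum to zero. -/
lemma exists_unique_drop [NeZero n] (f : ZMod n → ℤ)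
    (hf : ∀ j, f (j + 1) = f j + 1 ∨ f (j + 1) = f j + 1 - n) :
    ∃ j₀, f (j₀ + 1) = f j₀ + 1 - n ∧ ∀ j ≠ j₀, f (j + 1) = f j + 1 := by
  classical
  set W := Finset.univ.filter fun j => f (j + 1) ≠ f j + 1
  have hn : (n : ℤ) ≠ 0 := by exact_mod_cast NeZero.ne n
  have hdiff : ∀ j, f (j + 1) - f j - 1 = if j ∈ W then -(n : ℤ) else 0 := by
    intro j
    simp only [W, Finset.mem_filter, Finset.mem_univ, true_and]
    split_ifs <;> rcases hf j with h | h <;> omega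
  have hsum : ∑ j, (f (j + 1) - f j - 1) = -n := by
    rw [Finset.sum_sub_distrib, Finset.sum_sub_distrib,
      Fintype.sum_equiv (Equiv.addRight 1) (fun j => f (j + 1)) f fun _ => rfl]
    simp [ZMod.card]
  simp only [hdiff, Finset.sum_ite_mem, Finset.univ_inter, Finset.sum_const, nsmul_eq_mul] at hsum
  have hW : W.card = 1 := by
    have : ((W.card : ℤ) - 1) * n = 0 := by linear_combination -hsum
    exact_mod_cast sub_eq_zero.1 ((mul_eq_zero.1 this).resolve_right hn)
  obtain ⟨j₀, hj₀⟩ := Finset.card_eq_one.1 hW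
  refine ⟨j₀, ?_, fun j hj => ?_⟩
  · have : j₀ ∈ W := by simp [hj₀]
    simp only [W, Finset.mem_filter, Finset.mem_univ, true_and] at this
    exact (hf j₀).resolve_left this
  · have : j ∉ W := by simp [hj₀, hj]
    simpa [W] using this

end Cycles

lemma content_period (m l : ℕ) : content ((m : ℤ), -(l : ℤ)) = ((l + m : ℕ) : ℤ) := by
  push_cast [content]
  ring

lemma content_of_wrap {ω x y : Cell} (h : y + ω = x + (1, 0)) :
    content y = content x + 1 - content ω := by
  have h' := congrArg content h
  rw [content_add, content_add] at h'
  simp only [content] at h' ⊢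
  omega

lemma isNILoop_image_of_mem_LPathIn {ω u v : Cell} {D p : Set Cell} {n : ℕ}
    (hD : InjOn (pr ω) D) (hp : p ∈ LPathIn D u v) (hwrap : v + (1, 0) = u + ω)
    (hn : (n : ℤ) = content ω) : IsNILoop ω n (pr ω '' p) := by
  obtain ⟨⟨q, hq, rfl⟩, hqD⟩ := hp
  have hlen : (q.map (pr ω)).length = n := by
    have := content_of_wrap hwrap.symm
    have := hq.length_eq
    rw [List.length_map]
    omega
  obtain ⟨w, hinj, hrange, hstep⟩ :=
    exists_cycle_of_isChain (R := cylStep ω) (a := pr ω u) (b := pr ω v) hlen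
    (List.isChain_map_of_isChain (pr ω) (fun a b h => ⟨a, b, rfl, rfl, h⟩) hq.2.2)
    (by simp [hq.1]) (by simp [hq.2.1])
    ⟨v, u + ω, rfl, by simpa using pr_add_zsmul u 1, Or.inl (by rw [← hwrap]; simp)⟩
    (hq.nodup.map_on fun x hx y hy => hD (hqD hx) (hqD hy))
  refine ⟨w, hinj, ?_, hstep⟩
  rw [hrange]
  ext
  simp

lemma exists_lattice_path_of_isNILoop {m l : ℕ} {lam : ℤ → ℤ} {S : Set (Cyl ((m : ℤ), -(l : ℤ)))}
    (hS : IsNILoop ((m : ℤ), -(l : ℤ)) (l + m) S) (hSD : S ⊆ pr _ '' lowerDiag m lam) :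
    ∃ u ∈ lowerDiag m lam, u.1 = 1 ∧
      ∃ p ∈ LPathIn (lowerDiag m lam) u (u + ((m : ℤ), -(l : ℤ)) - (1, 0)), pr _ '' p = S := by
  obtain ⟨U, -, rfl, hU⟩ := hS
  choose v hvD hvU using fun j => hSD (mem_range_self j)
  have hn : 0 < l + m := by have := (hvD 0).1; have := (hvD 0).2.1; omega
  have : NeZero (l + m) := ⟨hn.ne'⟩
  have hstep (j) : stepRel (v j) (v (j + 1)) ∨ v (j + 1) + ((m : ℤ), -(l : ℤ)) = v j + (1, 0) :=
    stepRel_or_wrap_of_cylStep (hvD j) (hvD (j + 1)) (by rw [hvU, hvU]; exact hU j)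
  obtain ⟨j₀, hdrop, hrise⟩ := exists_unique_drop (content ∘ v) fun j =>
    (hstep j).imp content_of_stepRel fun h => by simpa [content_period] using content_of_wrap h
  have hwrap : v (j₀ + 1) + ((m : ℤ), -(l : ℤ)) = v j₀ + (1, 0) :=
    (hstep j₀).resolve_left fun h => by
      have := content_of_stepRel h
      simp only [Function.comp_apply] at hdrop
      omega
  have hpath (j) (hj : j ≠ j₀) : stepRel (v j) (v (j + 1)) :=
    (hstep j).resolve_right fun h => by
      have := content_of_wrap h
      have := hrise j hj
      simp only [Function.comp_apply, content_period] at *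
      omega
  have hstart : (v (j₀ + 1)).1 = 1 := by
    have := (hvD j₀).2.1
    have := (hvD (j₀ + 1)).1
    have := congrArg Prod.fst hwrap
    simp only [Prod.fst_add] at this
    omega
  refine ⟨v (j₀ + 1), hvD _, hstart, range v,
    ⟨⟨cycleFrom v (j₀ + 1), ⟨head?_cycleFrom v _, ?_, isChain_cycleFrom v _ ?_⟩,
      (setOf_mem_cycleFrom v _).symm⟩, range_subset_iff.2 hvD⟩, ?_⟩
  · rw [getLast?_cycleFrom, add_sub_cancel_right, eq_sub_of_add_eq hwrap.symm]
  · simpa using hpath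
  · rw [← range_comp]
    exact congrArg range (funext hvU)

lemma exists_index_of_isNILoop {m l : ℕ} {lam : ℤ → ℤ} {S : Set (Cyl ((m : ℤ), -(l : ℤ)))}
    (hS : IsNILoop ((m : ℤ), -(l : ℤ)) (l + m) S) (hSD : S ⊆ cylDiag m l lam) :
    ∃ i : ℕ, ∃ p ∈ LPathIn (lowerDiag m lam) ((1 : ℤ), lam 1 - (i : ℤ))
      ((m : ℤ), lam 1 - (l : ℤ) - (i : ℤ)), pr _ '' p = S := by
  rw [cylDiag_eq_image_lowerDiag] at hSD
  obtain ⟨u, hu, hu1, p, hp, rfl⟩ := exists_lattice_path_of_isNILoop hS hSD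
  have hu2 : u.2 ≤ lam 1 := hu1 ▸ hu.2.2
  have hi : ((lam 1 - u.2).toNat : ℤ) = lam 1 - u.2 := Int.toNat_of_nonneg (by omega)
  have hstart : ((1 : ℤ), lam 1 - ((lam 1 - u.2).toNat : ℤ)) = u := Prod.ext hu1.symm (by omega)
  have hend : ((m : ℤ), lam 1 - (l : ℤ) - ((lam 1 - u.2).toNat : ℤ)) =
      u + ((m : ℤ), -(l : ℤ)) - (1, 0) :=
    Prod.ext (by simp only [Prod.fst_sub, Prod.fst_add, hu1]; ring)
      (by simp only [Prod.snd_sub, Prod.snd_add]; omega)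
  refine ⟨(lam 1 - u.2).toNat, p, ?_, rfl⟩
  rw [hstart, hend]
  exact hp

theorem lattice_paths_to_loops_bijection_general (m l : ℕ) (lam : ℤ → ℤ) :
    Function.Injective
      (fun z : Σ i : ℕ, ↥(LPathIn (lowerDiag m lam)
            ((1 : ℤ), lam 1 - (i : ℤ)) ((m : ℤ), lam 1 - (l : ℤ) - (i : ℤ))) =>
        pr ((m : ℤ), -(l : ℤ)) '' (z.2 : Set Cell)) ∧
    Set.range
      (fun z : Σ i : ℕ, ↥(LPathIn (lowerDiag m lam)
            ((1 : ℤ), lam 1 - (i : ℤ)) ((m : ℤ), lam 1 - (l : ℤ) - (i : ℤ))) =>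
        pr ((m : ℤ), -(l : ℤ)) '' (z.2 : Set Cell)) =
      {S : Set (Cyl ((m : ℤ), -(l : ℤ))) |
        IsNILoop ((m : ℤ), -(l : ℤ)) (l + m) S ∧ S ⊆ cylDiag m l lam} ∧
    ∀ z : Σ i : ℕ, ↥(LPathIn (lowerDiag m lam)
          ((1 : ℤ), lam 1 - (i : ℤ)) ((m : ℤ), lam 1 - (l : ℤ) - (i : ℤ))),
      pr ((m : ℤ), -(l : ℤ)) ⁻¹' (pr ((m : ℤ), -(l : ℤ)) '' (z.2 : Set Cell)) ∩
          lowerDiag m lam = (z.2 : Set Cell) := by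
  have hinj := injOn_pr_lowerDiag m (-l) lam
  refine ⟨?_, ?_, fun z => hinj.preimage_image_inter z.2.2.2⟩
  · rintro ⟨i, p, hp⟩ ⟨i', p', hp'⟩ h
    obtain rfl : p = p' := by
      rw [← hinj.preimage_image_inter hp.2, ← hinj.preimage_image_inter hp'.2]
      exact congrArg (pr _ ⁻¹' · ∩ _) h
    obtain rfl : i = i' := by
      have := (LPath.isLeast_content hp.1).unique (LPath.isLeast_content hp'.1)
      simp only [content] at this
      omega
    rfl
  · ext S
    refine ⟨?_, fun ⟨hS, hSD⟩ => ?_⟩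
    · rintro ⟨⟨i, p, hp⟩, rfl⟩
      refine ⟨isNILoop_image_of_mem_LPathIn hinj hp ?_ ?_, ?_⟩
      · ext <;> simp only [Prod.fst_add, Prod.snd_add] <;> ring
      · exact (content_period m l).symm
      · rw [cylDiag_eq_image_lowerDiag]
        exact image_mono hp.2
    · obtain ⟨i, p, hp, rfl⟩ := exists_index_of_isNILoop hS hSD
      exact ⟨⟨i, p, hp⟩, rfl⟩

/-- **Lemma 7.3**: for `λ ∈ P_{m,ℓ}`, the projection `π` induces a bijection from
`⨆_{i≥0} L_λ((1,λ_1−i),(m,λ_1−ℓ−i))` onto the set `L̂_λ` of non-intersecting loops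
contained in `λ̂`, with inverse `p ↦ π⁻¹(p) ∩ λ̄`. -/
theorem lattice_paths_to_loops_bijection (m l : ℕ) (hm : 1 ≤ m) (hl : 1 ≤ l)
    (lam : ℤ → ℤ) (hlam : IsRestricted m l lam) :
    Function.Injective
      (fun z : Σ i : ℕ, ↥(LPathIn (lowerDiag m lam)
            ((1 : ℤ), lam 1 - (i : ℤ)) ((m : ℤ), lam 1 - (l : ℤ) - (i : ℤ))) =>
        pr ((m : ℤ), -(l : ℤ)) '' (z.2 : Set Cell)) ∧
    Set.range
      (fun z : Σ i : ℕ, ↥(LPathIn (lowerDiag m lam)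
            ((1 : ℤ), lam 1 - (i : ℤ)) ((m : ℤ), lam 1 - (l : ℤ) - (i : ℤ))) =>
        pr ((m : ℤ), -(l : ℤ)) '' (z.2 : Set Cell)) =
      {S : Set (Cyl ((m : ℤ), -(l : ℤ))) |
        IsNILoop ((m : ℤ), -(l : ℤ)) (l + m) S ∧ S ⊆ cylDiag m l lam} ∧
    ∀ z : Σ i : ℕ, ↥(LPathIn (lowerDiag m lam)
          ((1 : ℤ), lam 1 - (i : ℤ)) ((m : ℤ), lam 1 - (l : ℤ) - (i : ℤ))),
      pr ((m : ℤ), -(l : ℤ)) ⁻¹' (pr ((m : ℤ), -(l : ℤ)) '' (z.2 : Set Cell)) ∩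
          lowerDiag m lam = (z.2 : Set Cell) :=
  lattice_paths_to_loops_bijection_general m l lam
end

section
/- Let ℓ,m ≥ 1, λ = ((ℓ+1)^m), and let k be an integer with 0 ≤ k ≤ ℓ; set ν^{(k)} = (ℓ^{m−1},k) = (ℓ,…,ℓ,k), a partition contained in λ. Then the map p ↦ λ ∖ p is a bijection from the set L((1,ℓ+1),(m,k+1)) of lattice paths from (1,ℓ+1) to (m,k+1) onto the set E_λ(ν^{(k)}) of excited diagrams of ν^{(k)} in λ (every such lattice path is automatically contained in the Young diagram λ). -/
open scoped BigOperators

/-!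
Each lattice step raises `a - b` by one, so a lattice path from `u` to `v` meets every diagonal
`a - b = c` between those of `u` and `v` in exactly one cell: it is the graph of a row function
`g` whose increments are `0` or `1`. The three cells `y + (1,0)`, `y + (0,1)`, `y + (1,1)` lie
on the path exactly when the path turns around `y` on the diagonal of `y`; exciting `y` pushes
that corner inwards, which lowers `g` by one there. So excitations carry path complements to
path complements, and conversely a path other than the corner path (the one whose complement is
`ν^{(k)}`) has a valley, where `g` can be raised; since this decreases `∑ (v.1 - g c)`, every
path is reached from the corner path.
-/

namespace LatticePath

def diag (x : Cell) : ℤ := x.1 - x.2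

def UnitSteps (a b : ℤ) (g : ℤ → ℤ) : Prop :=
  ∀ c, a ≤ c → c < b → g (c + 1) = g c ∨ g (c + 1) = g c + 1

def IsValley (g : ℤ → ℤ) (c : ℤ) : Prop := g (c - 1) = g c ∧ g (c + 1) = g c + 1

namespace UnitSteps

variable {a b : ℤ} {g : ℤ → ℤ}

theorem monotoneOn (h : UnitSteps a b g) : MonotoneOn g (Set.Icc a b) := by
  rintro c ⟨hac, -⟩ c' ⟨-, hc'b⟩ hcc'
  induction c', hcc' using Int.leInduction with
  | base => rfl
  | succ n hcn ih =>
    have := h n (by omega) (by omega)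
    have := ih (by omega)
    omega

theorem antitoneOn_sub (h : UnitSteps a b g) : AntitoneOn (fun c => g c - c) (Set.Icc a b) := by
  rintro c ⟨hac, -⟩ c' ⟨-, hc'b⟩ hcc'
  induction c', hcc' using Int.leInduction with
  | base => rfl
  | succ n hcn ih =>
    have := h n (by omega) (by omega)
    have := ih (by omega)
    dsimp only at *
    omega

theorem update (h : UnitSteps a b g) {c r : ℤ} (hac : a < c) (hcb : c < b)
    (hleft : r = g (c - 1) ∨ r = g (c - 1) + 1) (hright : g (c + 1) = r ∨ g (c + 1) = r + 1) :
    UnitSteps a b (Function.update g c r) := by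
  intro n han hnb
  have := h n han hnb
  rcases lt_trichotomy (n + 1) c with hn | hn | hn
  · rw [Function.update_of_ne (by omega), Function.update_of_ne (by omega)]
    exact this
  · obtain rfl : n = c - 1 := by omega
    rw [sub_add_cancel, Function.update_self, Function.update_of_ne (by omega)]
    exact hleft
  · rcases eq_or_ne n c with rfl | hnc
    · rw [Function.update_self, Function.update_of_ne (by omega)]
      exact hright
    · rw [Function.update_of_ne (by omega), Function.update_of_ne hnc]
      exact this

theorem exists_isValley (h : UnitSteps a b g) {c : ℤ} (hac : a < c) (hcb : c ≤ b)
    (hflat : g (c - 1) = g c) (hlt : g c < g b) :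
    ∃ c', c ≤ c' ∧ c' < b ∧ IsValley g c' := by
  induction c, hcb using Int.leInductionDown with
  | base => omega
  | pred n hnb ih =>
    rcases h (n - 1) (by omega) (by omega) with hflat' | hrise
    · rw [sub_add_cancel] at hflat'
      obtain ⟨c', hc', hc'b, hv⟩ := ih (by omega) hflat'.symm (by omega)
      exact ⟨c', by omega, hc'b, hv⟩
    · exact ⟨n - 1, le_rfl, by omega, hflat, hrise⟩

theorem exists_flat (h : UnitSteps a b g) {c₀ : ℤ} (hac : a ≤ c₀) (hcb : c₀ ≤ b)
    (hlt : g c₀ - c₀ < g a - a) :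
    ∃ c, a < c ∧ c ≤ c₀ ∧ g (c - 1) = g c ∧ g c ≤ g c₀ := by
  induction c₀, hac using Int.leInduction with
  | base => omega
  | succ n han ih =>
    rcases h n han (by omega) with hflat | hrise
    · exact ⟨n + 1, by omega, le_rfl, by rw [add_sub_cancel_right, hflat], le_rfl⟩
    · obtain ⟨c, hac, hcn, hflat, hle⟩ := ih (by omega) (by omega)
      exact ⟨c, hac, by omega, hflat, by omega⟩

/-- A flat step before `c₀` and a rise after it enclose a valley. -/
theorem exists_isValley_of_lt (h : UnitSteps a b g) {c₀ : ℤ} (hac : a ≤ c₀)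
    (hcb : c₀ ≤ b) (hdiag : g c₀ - c₀ < g a - a) (hrow : g c₀ < g b) :
    ∃ c, a < c ∧ c < b ∧ IsValley g c := by
  obtain ⟨c₁, hac₁, hc₁, hflat, hle⟩ := h.exists_flat hac hcb hdiag
  obtain ⟨c, hc₁c, hcb, hv⟩ := h.exists_isValley hac₁ (by omega) hflat (by omega)
  exact ⟨c, by omega, hcb, hv⟩

end UnitSteps

variable {Θ : Set Cell} {u v x : Cell} {g : ℤ → ℤ} {c : ℤ}

structure IsPathFun (u v : Cell) (g : ℤ → ℤ) : Prop where
  start : g (diag u) = u.1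
  finish : g (diag v) = v.1
  steps : UnitSteps (diag u) (diag v) g

def cellAt (g : ℤ → ℤ) (c : ℤ) : Cell := (g c, g c - c)

/-- The lattice path from `u` to `v` whose cell on the diagonal `diag x = c` is `cellAt g c`. -/
def graph (u v : Cell) (g : ℤ → ℤ) : Set Cell :=
  {x | diag u ≤ diag x ∧ diag x ≤ diag v ∧ x.1 = g (diag x)}

@[simp]
theorem diag_cellAt : diag (cellAt g c) = c := by
  simp [cellAt, diag]

theorem cellAt_diag (h : g (diag x) = x.1) : cellAt g (diag x) = x :=
  Prod.ext h (by show g (diag x) - diag x = x.2; rw [h, diag]; ring)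

theorem mem_graph_iff :
    x ∈ graph u v g ↔ ∃ c, diag u ≤ c ∧ c ≤ diag v ∧ cellAt g c = x := by
  constructor
  · rintro ⟨hux, hxv, hx⟩
    exact ⟨diag x, hux, hxv, cellAt_diag hx.symm⟩
  · rintro ⟨c, huc, hcv, rfl⟩
    exact ⟨by simpa using huc, by simpa using hcv, by rw [diag_cellAt]; rfl⟩

theorem stepRel_iff {x y : Cell} :
    stepRel x y ↔ diag y = diag x + 1 ∧ (y.1 = x.1 ∨ y.1 = x.1 + 1) := by
  obtain ⟨a, b⟩ := x
  obtain ⟨a', b'⟩ := y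
  simp only [stepRel, diag, Prod.mk_sub_mk, Prod.mk.injEq]
  omega

theorem diag_getElem_of_isChain {p : List Cell} (hp : p.IsChain stepRel) (i : ℕ)
    (hi : i < p.length) : diag p[i] = diag p[0] + i := by
  induction i with
  | zero => simp
  | succ i ih =>
    rw [(stepRel_iff.mp (List.isChain_iff_getElem.mp hp i hi)).1, ih (by omega)]
    push_cast
    ring

theorem exists_isPathFun_of_mem_LPath {S : Set Cell} (hS : S ∈ LPath u v) :
    ∃ g, IsPathFun u v g ∧ S = graph u v g := by
  obtain ⟨p, ⟨hhead, hlast, hp⟩, rfl⟩ := hS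
  have hlen : 0 < p.length := List.length_pos_iff.mpr (by rintro rfl; simp at hhead)
  have h0 : p[0] = u := by
    simpa [List.head?_eq_getElem?, List.getElem?_eq_getElem hlen] using hhead
  have hv : p[p.length - 1] = v := by
    simpa [List.getLast?_eq_getElem?, List.getElem?_eq_getElem (Nat.sub_one_lt_of_lt hlen)]
      using hlast
  have hdiag : ∀ i (hi : i < p.length), diag p[i] = diag u + i := fun i hi => by
    rw [diag_getElem_of_isChain hp i hi, h0]
  have hdv : diag v = diag u + (p.length - 1 : ℕ) := by rw [← hv, hdiag]
  set g : ℤ → ℤ := fun c => (p.getD (c - diag u).toNat u).1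
  have hgi : ∀ i (hi : i < p.length), g (diag u + i) = p[i].1 := fun i hi => by
    show (p.getD (diag u + i - diag u).toNat u).1 = _
    rw [show (diag u + i - diag u).toNat = i by omega, List.getD_eq_getElem _ _ hi]
  refine ⟨g, ⟨?_, ?_, ?_⟩, ?_⟩
  · simpa [h0] using hgi 0 hlen
  · rw [hdv, hgi _ (by omega), hv]
  · intro c hc hcv
    obtain ⟨i, rfl⟩ : ∃ i : ℕ, c = diag u + i := ⟨(c - diag u).toNat, by omega⟩
    rw [hgi i (by omega), add_assoc, ← Nat.cast_add_one, hgi (i + 1) (by omega)]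
    exact (stepRel_iff.mp (List.isChain_iff_getElem.mp hp i (by omega))).2
  · ext x
    simp only [Set.mem_ofPred_eq, List.mem_iff_getElem]
    constructor
    · rintro ⟨i, hi, rfl⟩
      have := hdiag i hi
      exact ⟨by omega, by omega, by rw [this, hgi i hi]⟩
    · rintro ⟨hux, hxv, hx⟩
      obtain ⟨i, hi⟩ : ∃ i : ℕ, diag x = diag u + i :=
        ⟨(diag x - diag u).toNat, by omega⟩
      have hi' : i < p.length := by omega
      refine ⟨i, hi', ?_⟩
      calc p[i] = cellAt g (diag p[i]) := (cellAt_diag (by rw [hdiag i hi', hgi i hi'])).symm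
        _ = x := by rw [hdiag i hi', ← hi, cellAt_diag hx.symm]

theorem graph_mem_LPath (hg : IsPathFun u v g)
    (huv : diag u ≤ diag v) : graph u v g ∈ LPath u v := by
  set n := (diag v - diag u).toNat
  have hn : diag u + (n : ℤ) = diag v := by omega
  refine ⟨(List.range (n + 1)).map (fun i : ℕ => cellAt g (diag u + i)), ⟨?_, ?_, ?_⟩, ?_⟩
  · rw [List.head?_map, List.head?_range, if_neg (by omega)]
    simpa using cellAt_diag hg.start
  · rw [List.getLast?_map, List.getLast?_range, if_neg (by omega)]
    simpa [hn] using cellAt_diag hg.finish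
  · show List.IsChain _ _
    rw [List.isChain_map, List.isChain_range_succ]
    intro i hi
    refine stepRel_iff.mpr ⟨by simp; ring, ?_⟩
    simpa [cellAt, add_assoc] using hg.steps (diag u + i) (by omega) (by omega)
  · ext x
    simp only [Set.mem_ofPred_eq, mem_graph_iff, List.mem_map, List.mem_range]
    constructor
    · rintro ⟨c, huc, hcv, rfl⟩
      exact ⟨(c - diag u).toNat, by omega, by congr; omega⟩
    · rintro ⟨i, hi, rfl⟩
      exact ⟨diag u + i, by omega, by omega, rfl⟩

theorem mem_graph_iff_of_diag_eq (h : diag x = c) :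
    x ∈ graph u v g ↔ diag u ≤ c ∧ c ≤ diag v ∧ x.1 = g c := by
  subst h
  rfl

theorem graph_congr {g' : ℤ → ℤ} (h : ∀ c, diag u ≤ c → c ≤ diag v → g c = g' c) :
    graph u v g = graph u v g' := by
  ext x
  simp only [graph, Set.mem_ofPred_eq]
  constructor <;> rintro ⟨hux, hxv, hx⟩ <;> refine ⟨hux, hxv, ?_⟩
  · rwa [← h _ hux hxv]
  · rwa [h _ hux hxv]

theorem graph_update (huc : diag u ≤ c) (hcv : c ≤ diag v)
    (r : ℤ) :
    graph u v (Function.update g c r) = insert (cellAt (Function.update g c r) c)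
      (graph u v g \ {cellAt g c}) := by
  simp only [diag] at huc hcv
  ext ⟨a, b⟩
  simp only [graph, diag, cellAt, Set.mem_insert_iff, Set.mem_sdiff, Set.mem_singleton_iff,
    Set.mem_ofPred_eq, Function.update_apply, Prod.mk.injEq]
  by_cases h : a - b = c
  · subst h
    simp only [if_true]
    omega
  · simp only [h, if_false]
    omega

namespace IsPathFun

theorem bounds_of_mem_graph (hg : IsPathFun u v g) (hx : x ∈ graph u v g) :
    u.1 ≤ x.1 ∧ x.1 ≤ v.1 ∧ v.2 ≤ x.2 ∧ x.2 ≤ u.2 := by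
  obtain ⟨hux, hxv, hx⟩ := hx
  have hu : diag u ∈ Set.Icc (diag u) (diag v) := ⟨le_rfl, hux.trans hxv⟩
  have hv : diag v ∈ Set.Icc (diag u) (diag v) := ⟨hux.trans hxv, le_rfl⟩
  have h1 := hg.steps.monotoneOn hu ⟨hux, hxv⟩ hux
  have h2 := hg.steps.monotoneOn ⟨hux, hxv⟩ hv hxv
  have h3 := hg.steps.antitoneOn_sub hu ⟨hux, hxv⟩ hux
  have h4 := hg.steps.antitoneOn_sub ⟨hux, hxv⟩ hv hxv
  simp only [hg.start, hg.finish, ← hx] at h1 h2 h3 h4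
  simp only [diag] at h1 h2 h3 h4
  omega

theorem update (hg : IsPathFun u v g) {r : ℤ} (huc : diag u < c) (hcv : c < diag v)
    (hleft : r = g (c - 1) ∨ r = g (c - 1) + 1) (hright : g (c + 1) = r ∨ g (c + 1) = r + 1) :
    IsPathFun u v (Function.update g c r) where
  start := by rw [Function.update_of_ne huc.ne]; exact hg.start
  finish := by rw [Function.update_of_ne hcv.ne']; exact hg.finish
  steps := hg.steps.update huc hcv hleft hright

theorem raise (hg : IsPathFun u v g) (huc : diag u < c) (hcv : c < diag v)
    (hv : IsValley g c) : IsPathFun u v (Function.update g c (g c + 1)) :=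
  hg.update huc hcv (.inr (by rw [hv.1])) (.inl hv.2)

end IsPathFun

theorem diff_graph_eq_excite (huc : diag u ≤ c) (hcv : c ≤ diag v)
    (hg' : graph u v (Function.update g c (g c + 1)) ⊆ Θ) :
    Θ \ graph u v g =
      ((Θ \ graph u v (Function.update g c (g c + 1))) \ {cellAt g c}) ∪
        {cellAt g c + (1, 1)} := by
  have hup : cellAt (Function.update g c (g c + 1)) c = cellAt g c + (1, 1) := by
    simp only [cellAt, Function.update_self, Prod.mk_add_mk]
    congr 1
    ring
  have hy : cellAt g c ∈ graph u v g := mem_graph_iff.mpr ⟨c, huc, hcv, rfl⟩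
  have hy' : cellAt g c + (1, 1) ∈ Θ := hg' (by rw [graph_update huc hcv, hup]; exact .inl rfl)
  have hy'g : cellAt g c + (1, 1) ∉ graph u v g := by
    rw [mem_graph_iff_of_diag_eq (c := c) (by simp [diag, cellAt])]
    simp [cellAt]
  rw [graph_update huc hcv, hup]
  ext x
  by_cases hx' : x = cellAt g c + (1, 1)
  · subst hx'
    simp [hy', hy'g]
  by_cases hx : x = cellAt g c
  · subst hx
    simp [hy, hx']
  · simp [hx, hx']

theorem isActive_of_isValley (hg : graph u v g ⊆ Θ)
    (hg' : graph u v (Function.update g c (g c + 1)) ⊆ Θ) (huc : diag u < c) (hcv : c < diag v)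
    (hv : IsValley g c) :
    IsActive Θ (Θ \ graph u v (Function.update g c (g c + 1))) (cellAt g c) := by
  rw [IsActive, Set.sdiff_sdiff_cancel_left hg']
  refine ⟨⟨hg (mem_graph_iff.mpr ⟨c, huc.le, hcv.le, rfl⟩), ?_⟩, ?_, ?_, ?_⟩
  · rw [mem_graph_iff_of_diag_eq diag_cellAt]
    simp [cellAt]
  · rw [mem_graph_iff_of_diag_eq (show _ = c + 1 by simp [diag, cellAt]; ring),
      Function.update_of_ne (by omega)]
    exact ⟨by omega, by omega, by simp [cellAt, hv.2]⟩
  · rw [mem_graph_iff_of_diag_eq (show _ = c - 1 by simp [diag, cellAt]; ring),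
      Function.update_of_ne (by omega)]
    exact ⟨by omega, by omega, by simp [cellAt, hv.1]⟩
  · rw [mem_graph_iff_of_diag_eq (show _ = c by simp [diag, cellAt])]
    exact ⟨by omega, by omega, by simp [cellAt]⟩

theorem exciteStep_of_isValley (hΘ : ∀ g, IsPathFun u v g → graph u v g ⊆ Θ)
    (hg : IsPathFun u v g) (huc : diag u < c) (hcv : c < diag v) (hv : IsValley g c) :
    exciteStep Θ (Θ \ graph u v (Function.update g c (g c + 1))) (Θ \ graph u v g) := by
  have hg' := hg.raise huc hcv hv
  exact ⟨cellAt g c, isActive_of_isValley (hΘ g hg) (hΘ _ hg') huc hcv hv,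
    diff_graph_eq_excite huc.le hcv.le (hΘ _ hg')⟩

theorem exists_isPathFun_of_exciteStep (hΘ : ∀ g, IsPathFun u v g → graph u v g ⊆ Θ)
    (hg : IsPathFun u v g) {E : Set Cell} (hE : exciteStep Θ (Θ \ graph u v g) E) :
    ∃ g', IsPathFun u v g' ∧ E = Θ \ graph u v g' := by
  obtain ⟨y, ⟨-, h10, h01, h11⟩, rfl⟩ := hE
  rw [Set.sdiff_sdiff_cancel_left (hΘ g hg)] at h10 h01 h11
  set c := diag y
  rw [mem_graph_iff_of_diag_eq (c := c + 1) (by simp [c, diag]; ring)] at h10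
  rw [mem_graph_iff_of_diag_eq (c := c - 1) (by simp [c, diag]; ring)] at h01
  rw [mem_graph_iff_of_diag_eq (c := c) (by simp [c, diag])] at h11
  simp only [Prod.fst_add, add_zero] at h10 h01 h11
  have hg' := hg.update (c := c) (r := y.1) (by omega) (by omega) (.inl h01.2.2)
    (.inr h10.2.2.symm)
  refine ⟨_, hg', ?_⟩
  have hraise :
      Function.update (Function.update g c y.1) c (Function.update g c y.1 c + 1) = g := by
    rw [Function.update_self, Function.update_idem, h11.2.2, Function.update_eq_self]
  have hy : cellAt (Function.update g c y.1) c = y := by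
    ext
    · exact Function.update_self _ _ _
    · simp [cellAt, c, diag]
  have := diff_graph_eq_excite (u := u) (v := v) (g := Function.update g c y.1) (c := c) (Θ := Θ)
    (by omega) (by omega) (by rw [hraise]; exact hΘ g hg)
  rw [hraise, hy] at this
  exact this.symm

theorem exists_isPathFun_of_reflTransGen (hΘ : ∀ g, IsPathFun u v g → graph u v g ⊆ Θ)
    {g₀ : ℤ → ℤ} (hg₀ : IsPathFun u v g₀) {D : Set Cell}
    (hD : Relation.ReflTransGen (exciteStep Θ) (Θ \ graph u v g₀) D) :
    ∃ g, IsPathFun u v g ∧ D = Θ \ graph u v g := by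
  induction hD with
  | refl => exact ⟨g₀, hg₀, rfl⟩
  | tail _ hE ih =>
    obtain ⟨g, hg, rfl⟩ := ih
    exact exists_isPathFun_of_exciteStep hΘ hg hE

/-- The lattice path from `u` to `v` that takes all its `(1,0)` steps first. -/
def cornerPath (u v : Cell) (c : ℤ) : ℤ := min v.1 (u.1 + (c - diag u))

theorem isPathFun_cornerPath (h₁ : u.1 ≤ v.1) (h₂ : v.2 ≤ u.2) :
    IsPathFun u v (cornerPath u v) where
  start := by simp [cornerPath, h₁]
  finish := by simp only [cornerPath, diag]; omega
  steps := by intro c _ _; simp only [cornerPath]; omega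

theorem IsPathFun.le_cornerPath (hg : IsPathFun u v g) (huc : diag u ≤ c) (hcv : c ≤ diag v) :
    g c ≤ cornerPath u v c := by
  have h1 := hg.steps.monotoneOn ⟨huc, hcv⟩ ⟨huc.trans hcv, le_rfl⟩ hcv
  have h2 := hg.steps.antitoneOn_sub ⟨le_rfl, huc.trans hcv⟩ ⟨huc, hcv⟩ huc
  simp only [hg.start, hg.finish] at h1 h2
  simp only [cornerPath]
  omega

theorem reflTransGen_cornerPath (hΘ : ∀ g, IsPathFun u v g → graph u v g ⊆ Θ)
    (hg : IsPathFun u v g) :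
    Relation.ReflTransGen (exciteStep Θ) (Θ \ graph u v (cornerPath u v)) (Θ \ graph u v g) := by
  induction hn : ∑ c ∈ Finset.Icc (diag u) (diag v), (v.1 - g c).toNat
    using Nat.strong_induction_on generalizing g with
  | _ n ih =>
  by_cases hcorner : ∀ c, diag u ≤ c → c ≤ diag v → cornerPath u v c ≤ g c
  · rw [graph_congr fun c huc hcv => (hg.le_cornerPath huc hcv).antisymm (hcorner c huc hcv)]
  push Not at hcorner
  obtain ⟨c₀, huc₀, hc₀v, hlt⟩ := hcorner
  obtain ⟨c, huc, hcv, hv⟩ := hg.steps.exists_isValley_of_lt huc₀ hc₀v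
    (by rw [hg.start]; simp only [cornerPath] at hlt; omega)
    (by rw [hg.finish]; simp only [cornerPath] at hlt; omega)
  have hg' := hg.raise huc hcv hv
  refine (ih _ ?_ hg' rfl).tail (exciteStep_of_isValley hΘ hg huc hcv hv)
  rw [← hn]
  apply Finset.sum_lt_sum
  · intro c' _
    rcases eq_or_ne c' c with rfl | hne
    · simp only [Function.update_self]; omega
    · rw [Function.update_of_ne hne]
  · refine ⟨c, Finset.mem_Icc.mpr ⟨huc.le, hcv.le⟩, ?_⟩
    have := hg.le_cornerPath (c := c + 1) (by omega) (by omega)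
    simp only [cornerPath, Function.update_self] at this ⊢
    have := hv.2
    omega

theorem excitedSet_diff_graph_cornerPath (h₁ : u.1 ≤ v.1) (h₂ : v.2 ≤ u.2)
    (hΘ : ∀ p ∈ LPath u v, p ⊆ Θ) :
    ExcitedSet Θ (Θ \ graph u v (cornerPath u v)) = (Θ \ ·) '' LPath u v := by
  have huv : diag u ≤ diag v := by simp only [diag]; omega
  have hΘ' : ∀ g, IsPathFun u v g → graph u v g ⊆ Θ :=
    fun g hg => hΘ _ (graph_mem_LPath hg huv)
  ext D
  constructor
  · intro hD
    obtain ⟨g, hg, rfl⟩ :=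
      exists_isPathFun_of_reflTransGen hΘ' (isPathFun_cornerPath h₁ h₂) hD
    exact ⟨_, graph_mem_LPath hg huv, rfl⟩
  · rintro ⟨p, hp, rfl⟩
    obtain ⟨g, hg, rfl⟩ := exists_isPathFun_of_mem_LPath hp
    exact reflTransGen_cornerPath hΘ' hg

section Rectangle

variable {L M K : ℤ}

theorem subset_youngDiag_of_mem_LPath (hK : 0 ≤ K) {p : Set Cell}
    (hp : p ∈ LPath (1, L + 1) (M, K + 1)) : p ⊆ youngDiag M (fun _ => L + 1) := by
  obtain ⟨g, hg, rfl⟩ := exists_isPathFun_of_mem_LPath hp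
  intro x hx
  obtain ⟨h₁, h₂, h₃, h₄⟩ := hg.bounds_of_mem_graph hx
  exact ⟨h₁, h₂, by simp only at h₃; omega, h₄⟩

theorem youngDiag_eq_diff_graph_cornerPath (hKL : K ≤ L) :
    youngDiag M (fun a => if a = M then K else L) =
      youngDiag M (fun _ => L + 1) \
        graph (1, L + 1) (M, K + 1) (cornerPath (1, L + 1) (M, K + 1)) := by
  ext ⟨a, b⟩
  simp only [youngDiag, graph, cornerPath, diag, Set.mem_sdiff, Set.mem_ofPred_eq]
  split_ifs <;> omega

end Rectangle

end LatticePath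

theorem excited_diagrams_are_path_complements_general (l m k : ℕ) (hm : 1 ≤ m)
    (hk : k ≤ l) :
    (∀ p ∈ LPath ((1 : ℤ), (l : ℤ) + 1) ((m : ℤ), (k : ℤ) + 1),
      p ⊆ youngDiag m (fun _ => (l : ℤ) + 1)) ∧
    Set.BijOn (fun p => youngDiag m (fun _ => (l : ℤ) + 1) \ p)
      (LPath ((1 : ℤ), (l : ℤ) + 1) ((m : ℤ), (k : ℤ) + 1))
      (ExcitedSet (youngDiag m (fun _ => (l : ℤ) + 1))
        (youngDiag m (fun a => if a = (m : ℤ) then (k : ℤ) else (l : ℤ)))) := by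
  have hpaths : ∀ p ∈ LPath ((1 : ℤ), (l : ℤ) + 1) ((m : ℤ), (k : ℤ) + 1),
      p ⊆ youngDiag m (fun _ => (l : ℤ) + 1) :=
    fun p hp => LatticePath.subset_youngDiag_of_mem_LPath (Int.natCast_nonneg k) hp
  refine ⟨hpaths, ?_⟩
  rw [LatticePath.youngDiag_eq_diff_graph_cornerPath (by exact_mod_cast hk),
    LatticePath.excitedSet_diff_graph_cornerPath (by simpa using hm) (by simpa using hk) hpaths]
  refine Set.InjOn.bijOn_image fun p hp q hq hpq => ?_
  rw [← Set.sdiff_sdiff_cancel_left (hpaths p hp), hpq, Set.sdiff_sdiff_cancel_left (hpaths q hq)]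

/-- **Proposition 7.4 (1)**: for `λ = ((ℓ+1)^m)` and `ν^{(k)} = (ℓ^{m−1},k)` with
`0 ≤ k ≤ ℓ`, the map `p ↦ λ ∖ p` is a bijection from the lattice paths
`L((1,ℓ+1),(m,k+1))` onto the excited diagrams `E_λ(ν^{(k)})`; moreover every such
lattice path is contained in the Young diagram `λ`. -/
theorem excited_diagrams_are_path_complements (l m k : ℕ) (hl : 1 ≤ l) (hm : 1 ≤ m)
    (hk : k ≤ l) :
    (∀ p ∈ LPath ((1 : ℤ), (l : ℤ) + 1) ((m : ℤ), (k : ℤ) + 1),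
      p ⊆ youngDiag m (fun _ => (l : ℤ) + 1)) ∧
    Set.BijOn (fun p => youngDiag m (fun _ => (l : ℤ) + 1) \ p)
      (LPath ((1 : ℤ), (l : ℤ) + 1) ((m : ℤ), (k : ℤ) + 1))
      (ExcitedSet (youngDiag m (fun _ => (l : ℤ) + 1))
        (youngDiag m (fun a => if a = (m : ℤ) then (k : ℤ) else (l : ℤ)))) :=
  excited_diagrams_are_path_complements_general l m k hm hk
end

section
/- Let ℓ,m ≥ 1 and let λ = ((ℓ+1)^m) and μ = (ℓ^{m−1},0) in P_{m,ℓ}. Then the map p ↦ λ̂ ∖ π(p) gives a bijection from the disjoint union ⨆_{i=0}^∞ L((1,ℓ+1−i),(m,1−i)) of sets of lattice paths onto the set E_{λ̂}(μ̂) of cylindric excited diagrams of μ̂ in λ̂. -/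
open scoped BigOperators

/-!
A periodic lattice path in `λ̃` is `stairPath D` for an antitone boundary function `D` with
`D (a + m) = D a - ℓ` and `D 1 ≤ ℓ + 1`; its cells in the columns `1, …, m` form a path of
`L((1, ℓ+1-i), (m, 1-i))` with `i = ℓ + 1 - D 1`, and `π` is injective on these columns.
We have `μ̃ = λ̃ ∖ stairPath L` for the top boundary `L` of `λ̃`, and an excitation at the active
cell `(j - 1, D j - 1)` turns `λ̃ ∖ stairPath D` into `λ̃ ∖ stairPath D'`, where `D'` lowers `D` by
one on the residue class of `j` modulo `m`. So the excited diagrams are exactly the sets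
`λ̃ ∖ stairPath D`: excitations stay in this family, and every boundary is reached from `L` by
undoing one lowering at a time, which decreases the area between the boundary and `L`.
-/

namespace Cylindric

def columns (a b : ℤ) : Set Cell := {x | a ≤ x.1 ∧ x.1 ≤ b}

/-- The lattice path that runs down column `a` from row `d a` to row `d (a + 1)`, for every `a`. -/
def stairPath (d : ℤ → ℤ) : Set Cell := {x | d (x.1 + 1) ≤ x.2 ∧ x.2 ≤ d x.1}

def hypograph (f : ℤ → ℤ) : Set Cell := {x | x.2 ≤ f x.1}

lemma stepRel_iff {u w : Cell} : stepRel u w ↔ w = (u.1 + 1, u.2) ∨ w = (u.1, u.2 - 1) := by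
  simp only [stepRel, Prod.ext_iff, Prod.fst_sub, Prod.snd_sub]
  omega

lemma insert_stairPath_inter_columns {d : ℤ → ℤ} (hd : Antitone d) {a b : Cell}
    (hab : stepRel a b) (hdb : d b.1 = b.2) {c : ℤ} (hbc : b.1 ≤ c) :
    Antitone (fun t => if t ≤ a.1 then a.2 else d t) ∧
      insert a (stairPath d ∩ columns b.1 c) =
        stairPath (fun t => if t ≤ a.1 then a.2 else d t) ∩ columns a.1 c := by
  have hstep := stepRel_iff.1 hab
  have hda : d (a.1 + 1) ≤ a.2 := by
    rcases hstep with rfl | rfl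
    · exact hdb.le
    · simp only at hdb
      exact (hd (show a.1 ≤ a.1 + 1 by omega)).trans (by omega)
  refine ⟨fun s t hst => ?_, ?_⟩
  · dsimp only
    split_ifs <;> first | omega | exact hd hst | exact (hd (by omega)).trans hda
  · ext ⟨x₁, x₂⟩
    simp only [Set.mem_insert_iff, stairPath, columns, Set.mem_inter_iff, Set.mem_ofPred_eq,
      Prod.ext_iff]
    rcases lt_trichotomy x₁ a.1 with h | rfl | h
    · rcases hstep with rfl | rfl <;> simp <;> omega
    · rcases hstep with rfl | rfl <;> simp at hdb hbc ⊢ <;> omega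
    · rw [if_neg (by omega), if_neg (by omega)]
      rcases hstep with rfl | rfl <;> simp <;> omega

lemma exists_stairPath_of_isLatticePathList :
    ∀ {p : List Cell} {u v : Cell}, IsLatticePathList u v p →
      ∃ d : ℤ → ℤ, Antitone d ∧ u.1 ≤ v.1 ∧ d u.1 = u.2 ∧ d (v.1 + 1) = v.2 ∧
        {x | x ∈ p} = stairPath d ∩ columns u.1 v.1
  | [], _, _, h => by simp [IsLatticePathList] at h
  | [a], u, v, ⟨hu, hv, _⟩ => by
      obtain rfl : a = u := by simpa using hu
      obtain rfl : a = v := by simpa using hv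
      refine ⟨fun _ => a.2, antitone_const, le_rfl, rfl, rfl, ?_⟩
      ext x
      simp only [List.mem_singleton, Set.mem_ofPred_eq, stairPath, columns, Set.mem_inter_iff,
        Prod.ext_iff]
      omega
  | a :: b :: p, u, v, ⟨hu, hv, hc⟩ => by
      obtain rfl : a = u := by simpa using hu
      obtain ⟨hab, hc⟩ := List.isChain_cons_cons.1 hc
      obtain ⟨d, hd, hbv, hdb, hdv, hset⟩ :=
        exists_stairPath_of_isLatticePathList (p := b :: p) ⟨rfl, by simpa using hv, hc⟩
      have hab₁ : a.1 ≤ b.1 := by rcases stepRel_iff.1 hab with rfl | rfl <;> simp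
      obtain ⟨hd', hset'⟩ := insert_stairPath_inter_columns hd hab hdb hbv
      refine ⟨_, hd', hab₁.trans hbv, by simp, (if_neg (show ¬v.1 + 1 ≤ a.1 by omega)).trans hdv,
        ?_⟩
      rw [← hset', ← hset]
      ext
      simp

lemma vertical_mem_LPath (a : ℤ) {s t : ℤ} (hst : s ≤ t) :
    {x : Cell | x.1 = a ∧ s ≤ x.2 ∧ x.2 ≤ t} ∈ LPath (a, t) (a, s) := by
  refine ⟨(List.range ((t - s).toNat + 1)).map fun k : ℕ => ((a, t - k) : Cell), ⟨?_, ?_, ?_⟩, ?_⟩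
  · simp [List.head?_range]
  · simp [List.getLast?_range]
    omega
  · refine List.isChain_map _ |>.2 <| (List.isChain_range_succ _ _).2 fun k _ => ?_
    right
    simp
  · ext ⟨x₁, x₂⟩
    simp only [Set.mem_ofPred_eq, List.mem_map, List.mem_range, Prod.ext_iff]
    constructor
    · rintro ⟨rfl, h₁, h₂⟩
      exact ⟨(t - x₂).toNat, by omega, rfl, by omega⟩
    · rintro ⟨k, hk, rfl, rfl⟩
      omega

lemma union_mem_LPath {S T : Set Cell} {u v w z : Cell} (hS : S ∈ LPath u v)
    (hT : T ∈ LPath w z) (hvw : stepRel v w) : S ∪ T ∈ LPath u z := by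
  obtain ⟨p, ⟨hpu, hpv, hp⟩, rfl⟩ := hS
  obtain ⟨q, ⟨hqw, hqz, hq⟩, rfl⟩ := hT
  refine ⟨p ++ q, ⟨?_, ?_, List.isChain_append.2 ⟨hp, hq, ?_⟩⟩, by ext; simp⟩
  · rw [List.head?_append, hpu]
    rfl
  · rw [List.getLast?_append, hqz]
    rfl
  · simp_all

lemma columns_eq_union {a b : ℤ} (hab : a ≤ b) : columns a b = columns a a ∪ columns (a + 1) b := by
  ext x
  simp only [columns, Set.mem_union, Set.mem_ofPred_eq]
  omega

lemma stairPath_inter_columns_self (d : ℤ → ℤ) (a : ℤ) :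
    stairPath d ∩ columns a a = {x | x.1 = a ∧ d (a + 1) ≤ x.2 ∧ x.2 ≤ d a} := by
  ext ⟨x₁, x₂⟩
  simp only [stairPath, columns, Set.mem_inter_iff, Set.mem_ofPred_eq]
  constructor
  · rintro ⟨h, h₁, h₂⟩
    obtain rfl : x₁ = a := le_antisymm h₂ h₁
    exact ⟨rfl, h⟩
  · rintro ⟨rfl, h⟩
    exact ⟨h, le_rfl, le_rfl⟩

lemma stairPath_inter_columns_congr {d d' : ℤ → ℤ} {a b : ℤ}
    (h : ∀ t, a ≤ t → t ≤ b + 1 → d t = d' t) :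
    stairPath d ∩ columns a b = stairPath d' ∩ columns a b := by
  ext ⟨x₁, x₂⟩
  simp only [stairPath, columns, Set.mem_inter_iff, Set.mem_ofPred_eq]
  refine and_congr_left fun hx => ?_
  rw [h x₁ hx.1 (by omega), h (x₁ + 1) (by omega) (by omega)]

lemma stairPath_inter_columns_mem_LPath {d : ℤ → ℤ} (hd : Antitone d) (n : ℕ) (a : ℤ) :
    stairPath d ∩ columns a (a + n) ∈ LPath (a, d a) (a + n, d (a + n + 1)) := by
  induction n generalizing a with
  | zero =>
    simpa [stairPath_inter_columns_self] using
      vertical_mem_LPath a (hd (le_add_of_nonneg_right zero_le_one))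
  | succ n ih =>
    have e : a + ((n + 1 : ℕ) : ℤ) = a + 1 + n := by push_cast; ring
    rw [e, columns_eq_union (by omega), Set.inter_union_distrib_left, stairPath_inter_columns_self]
    exact union_mem_LPath (vertical_mem_LPath a (hd (by omega))) (ih (a + 1))
      (stepRel_iff.2 (Or.inl rfl))

theorem mem_LPath_iff {S : Set Cell} {u v : Cell} :
    S ∈ LPath u v ↔ ∃ d : ℤ → ℤ, Antitone d ∧ u.1 ≤ v.1 ∧ d u.1 = u.2 ∧ d (v.1 + 1) = v.2 ∧
      S = stairPath d ∩ columns u.1 v.1 := by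
  constructor
  · rintro ⟨p, hp, rfl⟩
    exact exists_stairPath_of_isLatticePathList hp
  · rintro ⟨d, hd, huv, hu, hv, rfl⟩
    have e : u.1 + (v.1 - u.1).toNat = v.1 := by omega
    have h := stairPath_inter_columns_mem_LPath hd (v.1 - u.1).toNat u.1
    rwa [e, hu, hv] at h

lemma start_eq_of_mem_LPath {S : Set Cell} {u v u' v' : Cell} (h : S ∈ LPath u v)
    (h' : S ∈ LPath u' v') : u = u' := by
  have key : ∀ {u v}, S ∈ LPath u v → u ∈ S ∧ ∀ x ∈ S, u.1 ≤ x.1 ∧ x.2 ≤ u.2 := by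
    intro u v h
    obtain ⟨d, hd, huv, hu, -, rfl⟩ := mem_LPath_iff.1 h
    refine ⟨⟨⟨hu ▸ hd (by omega), hu.ge⟩, le_rfl, huv⟩, fun x hx => ⟨hx.2.1, ?_⟩⟩
    exact hx.1.2.trans (hu ▸ hd hx.2.1)
  obtain ⟨hu, hS⟩ := key h
  obtain ⟨hu', hS'⟩ := key h'
  exact Prod.ext (le_antisymm (hS u' hu').1 (hS' u hu).1) (le_antisymm (hS' u hu).2 (hS u' hu').2)

variable {m l : ℤ} {f g D : ℤ → ℤ}

def QuasiPeriodic (m l : ℤ) (f : ℤ → ℤ) : Prop := ∀ a, f (a + m) = f a - l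

lemma QuasiPeriodic.apply_add_mul (hf : QuasiPeriodic m l f) (a k : ℤ) :
    f (a + k * m) = f a - k * l := by
  induction k using Int.induction_on with
  | zero => simp
  | succ k ih => rw [add_one_mul, ← add_assoc, hf, ih]; ring
  | pred k ih =>
    have := hf (a + (-k - 1) * m)
    rw [show a + (-k - 1) * m + m = a + -k * m by ring, ih] at this
    linarith

lemma QuasiPeriodic.apply_of_eq (hf : QuasiPeriodic m l f) {s t k : ℤ} (h : t = s + k * m)
    (c : ℤ) : f (t + c) = f (s + c) - k * l := by
  rw [h, add_right_comm, hf.apply_add_mul]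

lemma exists_add_mul_mem_Icc (hm : 0 < m) (a : ℤ) : ∃ k : ℤ, 1 ≤ a + k * m ∧ a + k * m ≤ m := by
  have h := Int.emod_add_mul_ediv (a - 1) m
  have h₀ := Int.emod_nonneg (a - 1) hm.ne'
  have h₁ := Int.emod_lt_of_pos (a - 1) hm
  exact ⟨-((a - 1) / m), by linarith, by linarith⟩

lemma QuasiPeriodic.ext (hm : 0 < m) (hf : QuasiPeriodic m l f) (hg : QuasiPeriodic m l g)
    (h : ∀ a, 1 ≤ a → a ≤ m → f a = g a) : f = g := by
  funext a
  obtain ⟨k, hk₁, hk₂⟩ := exists_add_mul_mem_Icc hm a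
  have := h _ hk₁ hk₂
  rw [hf.apply_add_mul, hg.apply_add_mul] at this
  linarith

lemma QuasiPeriodic.antitone (hm : 0 < m) (hf : QuasiPeriodic m l f)
    (h : ∀ a, 1 ≤ a → a ≤ m → f (a + 1) ≤ f a) : Antitone f := by
  refine antitone_int_of_succ_le fun a => ?_
  obtain ⟨k, hk₁, hk₂⟩ := exists_add_mul_mem_Icc hm a
  have := h _ hk₁ hk₂
  rw [add_right_comm, hf.apply_add_mul, hf.apply_add_mul] at this
  linarith

lemma QuasiPeriodic.mem_zline_iff (hf : QuasiPeriodic m l f) {x : Cell} {j : ℤ} :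
    x ∈ zline (m, -l) (j, f j) ↔ m ∣ x.1 - j ∧ x.2 = f x.1 := by
  constructor
  · rintro ⟨k, rfl⟩
    have := hf.apply_add_mul j k
    simp only [Prod.fst_add, Prod.snd_add, Prod.smul_mk, smul_eq_mul]
    exact ⟨⟨k, by ring⟩, by rw [this]; ring⟩
  · rintro ⟨⟨k, hk⟩, hx⟩
    have := hf.apply_of_eq (k := k) (show x.1 = j + k * m by linarith) 0
    simp only [add_zero] at this
    exact ⟨k, Prod.ext (by simp; linarith) (by simp; linarith)⟩

/-- The quasi-periodic extension of `g` from `[1, m]` to `ℤ`. -/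
def qpExtend (m l : ℤ) (g : ℤ → ℤ) (a : ℤ) : ℤ := g ((a - 1) % m + 1) - (a - 1) / m * l

lemma quasiPeriodic_qpExtend (hm : m ≠ 0) (g : ℤ → ℤ) : QuasiPeriodic m l (qpExtend m l g) := by
  intro a
  have e : a + m - 1 = a - 1 + 1 * m := by ring
  simp only [qpExtend, e, Int.add_mul_emod_self_right, Int.add_mul_ediv_right _ _ hm]
  ring

lemma qpExtend_of_mem_Icc {a : ℤ} (h₁ : 1 ≤ a) (h₂ : a ≤ m) (g : ℤ → ℤ) :
    qpExtend m l g a = g a := by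
  simp [qpExtend, Int.emod_eq_of_lt (a := a - 1) (b := m) (by omega) (by omega),
    Int.ediv_eq_zero_of_lt (a := a - 1) (b := m) (by omega) (by omega)]

def IsPeriodic (ω : Cell) (S : Set Cell) : Prop := ∀ x ∈ S, ∀ k : ℤ, x + k • ω ∈ S

lemma add_zsmul_mk (x : Cell) (k m l : ℤ) :
    x + k • ((m, -l) : Cell) = (x.1 + k * m, x.2 - k * l) := by
  ext <;> simp [sub_eq_add_neg]

lemma QuasiPeriodic.isPeriodic_hypograph (hf : QuasiPeriodic m l f) :
    IsPeriodic (m, -l) (hypograph f) := by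
  intro x hx k
  simp only [hypograph, Set.mem_ofPred_eq, add_zsmul_mk, hf.apply_add_mul] at hx ⊢
  linarith

lemma QuasiPeriodic.isPeriodic_stairPath (hf : QuasiPeriodic m l f) :
    IsPeriodic (m, -l) (stairPath f) := by
  intro x hx k
  simp only [stairPath, Set.mem_ofPred_eq, add_zsmul_mk, add_right_comm x.1 (k * m),
    hf.apply_add_mul] at hx ⊢
  constructor <;> linarith [hx.1, hx.2]

lemma perClosure_inter_columns (hm : 0 < m) {S : Set Cell} (hS : IsPeriodic (m, -l) S) :
    perClosure (m, -l) (S ∩ columns 1 m) = S := by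
  ext x
  constructor
  · rintro ⟨y, hy, k, rfl⟩
    exact hS y hy.1 k
  · intro hx
    obtain ⟨k, hk⟩ := exists_add_mul_mem_Icc hm x.1
    refine ⟨x + k • (m, -l), ⟨hS x hx k, by simpa [add_zsmul_mk, columns] using hk⟩, -k, ?_⟩
    rw [add_assoc, ← add_smul, add_neg_cancel, zero_smul, add_zero]

lemma perDiag_eq (hm : 0 < m) (g : ℤ → ℤ) : perDiag m l g = hypograph (qpExtend m l g) := by
  have h : lowerDiag m g = hypograph (qpExtend m l g) ∩ columns 1 m := by
    ext ⟨a, b⟩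
    simp only [lowerDiag, hypograph, columns, Set.mem_inter_iff, Set.mem_ofPred_eq]
    constructor
    · rintro ⟨h₁, h₂, h⟩
      exact ⟨by rwa [qpExtend_of_mem_Icc h₁ h₂], h₁, h₂⟩
    · rintro ⟨h, h₁, h₂⟩
      exact ⟨h₁, h₂, by rwa [qpExtend_of_mem_Icc h₁ h₂] at h⟩
  rw [perDiag, h,
    perClosure_inter_columns hm (quasiPeriodic_qpExtend hm.ne' g).isPeriodic_hypograph]

lemma pr_eq_pr_iff {ω u v : Cell} : pr ω u = pr ω v ↔ ∃ k : ℤ, v = u + k • ω := by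
  simp only [pr, QuotientAddGroup.eq, AddSubgroup.mem_zmultiples_iff, neg_add_eq_sub,
    eq_sub_iff_add_eq']
  exact exists_congr fun k => eq_comm

lemma image_pr_perClosure (ω : Cell) (S : Set Cell) : pr ω '' perClosure ω S = pr ω '' S := by
  refine (Set.image_subset_iff.2 ?_).antisymm (Set.image_mono fun x hx => ⟨x, hx, 0, by simp⟩)
  rintro _ ⟨y, hy, k, rfl⟩
  exact ⟨y, hy, pr_eq_pr_iff.2 ⟨k, rfl⟩⟩

lemma image_pr_diff {ω : Cell} (A : Set Cell) {B : Set Cell} (hB : IsPeriodic ω B) :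
    pr ω '' (A \ B) = pr ω '' A \ pr ω '' B := by
  ext z
  constructor
  · rintro ⟨x, ⟨hxA, hxB⟩, rfl⟩
    refine ⟨⟨x, hxA, rfl⟩, ?_⟩
    rintro ⟨y, hy, hxy⟩
    obtain ⟨k, rfl⟩ := pr_eq_pr_iff.1 hxy
    exact hxB (hB y hy k)
  · rintro ⟨⟨x, hxA, rfl⟩, hx⟩
    exact ⟨x, ⟨hxA, fun hxB => hx ⟨x, hxB, rfl⟩⟩, rfl⟩

lemma injOn_pr_columns (hm : 0 < m) : Set.InjOn (pr (m, -l)) (columns 1 m) := by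
  intro x hx y hy hxy
  obtain ⟨k, rfl⟩ := pr_eq_pr_iff.1 hxy
  simp only [columns, Set.mem_ofPred_eq, add_zsmul_mk] at hx hy
  obtain rfl : k = 0 := by
    by_contra hk
    rcases lt_or_gt_of_ne hk with hk | hk <;> nlinarith
  simp

lemma eq_of_image_pr_compl_eq (hm : 0 < m) {Λ S T : Set Cell} (hS : S ⊆ Λ ∩ columns 1 m)
    (hT : T ⊆ Λ ∩ columns 1 m)
    (h : pr (m, -l) '' Λ \ pr (m, -l) '' S = pr (m, -l) '' Λ \ pr (m, -l) '' T) : S = T := by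
  refine ((injOn_pr_columns (l := l) hm).image_eq_image_iff (hS.trans Set.inter_subset_right)
    (hT.trans Set.inter_subset_right)).1 ?_
  rw [← Set.sdiff_sdiff_cancel_left (Set.image_mono (hS.trans Set.inter_subset_left)), h,
    Set.sdiff_sdiff_cancel_left (Set.image_mono (hT.trans Set.inter_subset_left))]

/-- `λ̃ = hypograph (topBoundary m l)` for `λ = ((ℓ+1)^m)`. -/
def topBoundary (m l : ℤ) : ℤ → ℤ := qpExtend m l fun _ => l + 1

lemma quasiPeriodic_topBoundary (hm : 0 < m) : QuasiPeriodic m l (topBoundary m l) :=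
  quasiPeriodic_qpExtend hm.ne' _

lemma topBoundary_of_mem_Icc {a : ℤ} (h₁ : 1 ≤ a) (h₂ : a ≤ m) : topBoundary m l a = l + 1 :=
  qpExtend_of_mem_Icc h₁ h₂ _

lemma topBoundary_add_one (hm : 0 < m) : topBoundary m l (m + 1) = 1 := by
  rw [add_comm, quasiPeriodic_topBoundary hm, topBoundary_of_mem_Icc le_rfl hm]
  ring

lemma antitone_topBoundary (hm : 0 < m) (hl : 0 ≤ l) : Antitone (topBoundary m l) := by
  refine (quasiPeriodic_topBoundary hm).antitone hm fun a h₁ h₂ => ?_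
  rw [topBoundary_of_mem_Icc h₁ h₂]
  rcases h₂.lt_or_eq with h₂ | rfl
  · rw [topBoundary_of_mem_Icc (by omega) (by omega)]
  · rw [topBoundary_add_one hm]
    omega

lemma perDiag_mu_eq (hm : 0 < m) (hl : 0 ≤ l) :
    perDiag m l (fun a => if a = m then 0 else l) =
      hypograph (topBoundary m l) \ stairPath (topBoundary m l) := by
  have hL := quasiPeriodic_topBoundary (l := l) hm
  have h : qpExtend m l (fun a => if a = m then 0 else l) =
      fun a => topBoundary m l (a + 1) - 1 := by
    refine (quasiPeriodic_qpExtend hm.ne' _).ext hm (fun a => ?_) fun a h₁ h₂ => ?_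
    · simp only [add_right_comm a m 1, hL (a + 1)]
      ring
    · rw [qpExtend_of_mem_Icc h₁ h₂]
      rcases h₂.lt_or_eq with h₂ | rfl
      · rw [if_neg h₂.ne, topBoundary_of_mem_Icc (by omega) (by omega)]
        ring
      · rw [if_pos rfl, topBoundary_add_one hm]
        ring
  rw [perDiag_eq hm, h]
  ext x
  have := antitone_topBoundary hm hl (le_add_of_nonneg_right zero_le_one : x.1 ≤ x.1 + 1)
  simp only [hypograph, stairPath, Set.mem_sdiff, Set.mem_ofPred_eq]
  omega

structure IsBoundary (m l : ℤ) (D : ℤ → ℤ) : Prop where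
  quasiPeriodic : QuasiPeriodic m l D
  antitone : Antitone D
  le_top : D 1 ≤ l + 1

lemma isBoundary_topBoundary (hm : 0 < m) (hl : 0 ≤ l) : IsBoundary m l (topBoundary m l) :=
  ⟨quasiPeriodic_topBoundary hm, antitone_topBoundary hm hl, (topBoundary_of_mem_Icc le_rfl hm).le⟩

lemma IsBoundary.le_topBoundary (hm : 0 < m) (hD : IsBoundary m l D) (a : ℤ) :
    D a ≤ topBoundary m l a := by
  obtain ⟨k, hk₁, hk₂⟩ := exists_add_mul_mem_Icc hm a
  have h₁ := hD.antitone hk₁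
  have h₂ := hD.le_top
  rw [hD.quasiPeriodic.apply_add_mul] at h₁
  have h₃ := (quasiPeriodic_topBoundary (l := l) hm).apply_add_mul a k
  rw [topBoundary_of_mem_Icc hk₁ hk₂] at h₃
  linarith

lemma IsBoundary.stairPath_subset (hm : 0 < m) (hD : IsBoundary m l D) :
    stairPath D ⊆ hypograph (topBoundary m l) :=
  fun x hx => hx.2.trans (hD.le_topBoundary hm x.1)

lemma mem_LPath_iff_isBoundary (hm : 0 < m) {i : ℤ} (hi : 0 ≤ i) {S : Set Cell} :
    S ∈ LPath (1, l + 1 - i) (m, 1 - i) ↔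
      ∃ D, IsBoundary m l D ∧ D 1 = l + 1 - i ∧ S = stairPath D ∩ columns 1 m := by
  rw [mem_LPath_iff]
  constructor
  · rintro ⟨d, hd, -, hd₁, hdm, rfl⟩
    dsimp only at hd₁ hdm ⊢
    have hD := quasiPeriodic_qpExtend (l := l) hm.ne' d
    have hDd : ∀ a, 1 ≤ a → a ≤ m + 1 → qpExtend m l d a = d a := by
      intro a h₁ h₂
      rcases h₂.lt_or_eq with h₂ | rfl
      · exact qpExtend_of_mem_Icc h₁ (by omega) d
      · have := hD 1
        rw [add_comm] at this
        rw [this, qpExtend_of_mem_Icc le_rfl hm, hd₁, hdm]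
        ring
    have hD₁ := hDd 1 le_rfl (by omega)
    refine ⟨qpExtend m l d, ⟨hD, hD.antitone hm fun a h₁ h₂ => ?_, by omega⟩, by omega,
      (stairPath_inter_columns_congr hDd).symm⟩
    rw [hDd a h₁ (by omega), hDd (a + 1) (by omega) (by omega)]
    exact hd (by omega)
  · rintro ⟨D, hD, hD₁, rfl⟩
    refine ⟨D, hD.antitone, hm, hD₁, ?_, rfl⟩
    dsimp only
    rw [add_comm, hD.quasiPeriodic, hD₁]
    ring

lemma image_pr_compl_stairPath (hm : 0 < m) (hD : QuasiPeriodic m l D) :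
    pr (m, -l) '' (hypograph (topBoundary m l) \ stairPath D) =
      pr (m, -l) '' hypograph (topBoundary m l) \ pr (m, -l) '' (stairPath D ∩ columns 1 m) := by
  have h := image_pr_perClosure (m, -l) (stairPath D ∩ columns 1 m)
  rw [perClosure_inter_columns hm hD.isPeriodic_stairPath] at h
  rw [image_pr_diff _ hD.isPeriodic_stairPath, h]

def lowerAt (m j : ℤ) (D : ℤ → ℤ) (a : ℤ) : ℤ := D a - if m ∣ a - j then 1 else 0

def raiseAt (m j : ℤ) (D : ℤ → ℤ) (a : ℤ) : ℤ := D a + if m ∣ a - j then 1 else 0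

lemma lowerAt_raiseAt (m j : ℤ) (D : ℤ → ℤ) : lowerAt m j (raiseAt m j D) = D := by
  funext a
  simp [lowerAt, raiseAt]

lemma dvd_add_sub_iff {a j : ℤ} : m ∣ a + m - j ↔ m ∣ a - j := by
  rw [add_sub_right_comm, dvd_add_self_right]

lemma IsBoundary.lowerAt (hD : IsBoundary m l D) {j : ℤ} (hj : D (j + 1) < D j) :
    IsBoundary m l (lowerAt m j D) := by
  refine ⟨fun a => ?_, antitone_int_of_succ_le fun a => ?_, ?_⟩
  · simp only [Cylindric.lowerAt, dvd_add_sub_iff, hD.quasiPeriodic a]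
    ring
  · have := hD.antitone (le_add_of_nonneg_right zero_le_one : a ≤ a + 1)
    simp only [Cylindric.lowerAt]
    split_ifs with h₁ h₀ h₀ <;> try omega
    obtain ⟨k, hk⟩ := h₀
    have e₀ := hD.quasiPeriodic.apply_of_eq (k := k) (show a = j + k * m by linarith) 0
    have e₁ := hD.quasiPeriodic.apply_of_eq (k := k) (show a = j + k * m by linarith) 1
    simp only [add_zero] at e₀
    omega
  · have := hD.le_top
    simp only [Cylindric.lowerAt]
    split_ifs <;> omega

lemma IsBoundary.raiseAt (hm : 0 < m) (hD : IsBoundary m l D) {j : ℤ} (hj : D j < D (j - 1))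
    (htop : D j < topBoundary m l j) : IsBoundary m l (raiseAt m j D) := by
  refine ⟨fun a => ?_, antitone_int_of_succ_le fun a => ?_, ?_⟩
  · simp only [Cylindric.raiseAt, dvd_add_sub_iff, hD.quasiPeriodic a]
    ring
  · have := hD.antitone (le_add_of_nonneg_right zero_le_one : a ≤ a + 1)
    simp only [Cylindric.raiseAt]
    split_ifs with h₁ h₀ h₀ <;> try omega
    obtain ⟨k, hk⟩ := h₁
    have e₀ := hD.quasiPeriodic.apply_of_eq (k := k) (show a = j - 1 + k * m by linarith) 0
    have e₁ := hD.quasiPeriodic.apply_of_eq (k := k) (show a = j - 1 + k * m by linarith) 1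
    simp only [add_zero, sub_add_cancel] at e₀ e₁
    omega
  · have := hD.le_top
    simp only [Cylindric.raiseAt]
    split_ifs with h
    · obtain ⟨k, hk⟩ := h
      have e := hD.quasiPeriodic.apply_of_eq (k := k) (show 1 = j + k * m by linarith) 0
      have e' := (quasiPeriodic_topBoundary (l := l) hm).apply_of_eq (k := k)
        (show 1 = j + k * m by linarith) 0
      simp only [add_zero, topBoundary_of_mem_Icc le_rfl hm] at e e'
      omega
    · omega

lemma sdiff_stairPath_lowerAt (hm : 0 < m) (hD : IsBoundary m l D) (j : ℤ) :
    hypograph (topBoundary m l) \ stairPath (lowerAt m j D) =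
      (hypograph (topBoundary m l) \ stairPath D) \ zline (m, -l) (j - 1, D j - 1) ∪
        zline (m, -l) (j, D j) := by
  have hD' : QuasiPeriodic m l fun t => D (t + 1) - 1 := fun t => by
    simp only [add_right_comm t m 1, hD.quasiPeriodic (t + 1)]
    ring
  ext x
  have h₁ := hD'.mem_zline_iff (x := x) (j := j - 1)
  have h₂ := hD.quasiPeriodic.mem_zline_iff (x := x) (j := j)
  have e : x.1 + 1 - j = x.1 - (j - 1) := by ring
  have hDx := hD.antitone (le_add_of_nonneg_right zero_le_one : x.1 ≤ x.1 + 1)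
  have hLx := hD.le_topBoundary hm x.1
  simp only [hypograph, stairPath, lowerAt, Set.mem_union, Set.mem_sdiff, Set.mem_ofPred_eq,
    sub_add_cancel] at h₁ h₂ ⊢
  rw [h₁, h₂, e]
  -- everything now depends only on `D x.1`, `D (x.1 + 1)` and the residue of `x.1` mod `m`
  by_cases p : m ∣ x.1 - (j - 1) <;> by_cases q : m ∣ x.1 - j <;> simp only [p, q, if_true,
    if_false, true_and, false_and, not_false_eq_true, and_true, or_false, sub_zero] <;> omega

lemma IsBoundary.pExciteStep_lowerAt (hm : 0 < m) (hD : IsBoundary m l D) {j : ℤ}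
    (hj : D (j + 1) < D j) :
    pExciteStep (m, -l) (hypograph (topBoundary m l)) (hypograph (topBoundary m l) \ stairPath D)
      (hypograph (topBoundary m l) \ stairPath (Cylindric.lowerAt m j D)) := by
  have h₁ := hD.antitone (sub_le_self j zero_le_one)
  have h₂ := hD.le_topBoundary hm (j - 1)
  have h₃ := hD.le_topBoundary hm j
  refine ⟨(j - 1, D j - 1), ⟨?_, ?_, ?_, ?_⟩, ?_⟩
  all_goals simp only [hypograph, stairPath, Set.mem_sdiff, Set.mem_ofPred_eq, Prod.mk_add_mk,
    sub_add_cancel, add_zero, not_and]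
  · omega
  · omega
  · omega
  · omega
  · exact sdiff_stairPath_lowerAt hm hD j

lemma IsBoundary.exists_of_pExciteStep (hm : 0 < m) (hD : IsBoundary m l D) {E : Set Cell}
    (h : pExciteStep (m, -l) (hypograph (topBoundary m l))
      (hypograph (topBoundary m l) \ stairPath D) E) :
    ∃ D', IsBoundary m l D' ∧ E = hypograph (topBoundary m l) \ stairPath D' := by
  obtain ⟨⟨a, b⟩, ⟨hy, h₁₀, h₀₁, -⟩, rfl⟩ := h
  simp only [hypograph, stairPath, Set.mem_sdiff, Set.mem_ofPred_eq, Prod.mk_add_mk, add_zero,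
    not_and] at hy h₁₀ h₀₁
  have hb : b = D (a + 1) - 1 := by omega
  have hj : D (a + 1 + 1) < D (a + 1) := by omega
  refine ⟨Cylindric.lowerAt m (a + 1) D, hD.lowerAt hj, ?_⟩
  rw [sdiff_stairPath_lowerAt hm hD (a + 1), hb, add_sub_cancel_right]
  simp

noncomputable def defect (m l : ℤ) (D : ℤ → ℤ) : ℤ :=
  ∑ a ∈ Finset.Icc 2 (m + 1), (topBoundary m l a - D a)

lemma IsBoundary.defect_nonneg (hm : 0 < m) (hD : IsBoundary m l D) : 0 ≤ defect m l D :=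
  Finset.sum_nonneg fun a _ => sub_nonneg.2 (hD.le_topBoundary hm a)

lemma defect_raiseAt {j : ℤ} (hj : j ∈ Finset.Icc 2 (m + 1)) (D : ℤ → ℤ) :
    defect m l (raiseAt m j D) = defect m l D - 1 := by
  have hclass : ∀ a ∈ Finset.Icc 2 (m + 1), (m ∣ a - j ↔ a = j) := by
    intro a ha
    refine ⟨fun h => ?_, fun h => by simp [h]⟩
    rw [Finset.mem_Icc] at ha hj
    have := Int.eq_zero_of_abs_lt_dvd h (abs_lt.2 ⟨by omega, by omega⟩)
    omega
  simp only [defect, raiseAt, sub_add_eq_sub_sub, Finset.sum_sub_distrib]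
  rw [Finset.sum_congr rfl fun a ha => if_congr (hclass a ha) rfl rfl, Finset.sum_ite_eq',
    if_pos hj]

lemma IsBoundary.exists_raise (hm : 0 < m) (hl : 0 < l) (hD : IsBoundary m l D)
    (hne : D ≠ topBoundary m l) :
    ∃ j ∈ Finset.Icc 2 (m + 1), D j < D (j - 1) ∧ D j < topBoundary m l j := by
  by_contra! h
  have hconst : ∀ a, 1 ≤ a → a ≤ m → D a = D 1 := by
    intro a ha
    induction a, ha using Int.leInduction with
    | base => simp
    | succ a ha ih =>
      intro ham
      have h₁ := h (a + 1) (Finset.mem_Icc.2 ⟨by omega, by omega⟩)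
      rw [add_sub_cancel_right, topBoundary_of_mem_Icc (by omega) ham] at h₁
      have := ih (by omega)
      have := hD.antitone (le_add_of_nonneg_right zero_le_one : a ≤ a + 1)
      have := hD.le_top
      omega
  have htop : D 1 = l + 1 := by
    have h₁ := h (m + 1) (Finset.mem_Icc.2 ⟨by omega, le_rfl⟩)
    have e : D (m + 1) = D 1 - l := by rw [add_comm]; exact hD.quasiPeriodic 1
    rw [add_sub_cancel_right, topBoundary_add_one hm, e, hconst m hm le_rfl] at h₁
    have := hD.le_top
    omega
  refine hne (hD.quasiPeriodic.ext hm (quasiPeriodic_topBoundary hm) fun a h₁ h₂ => ?_)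
  rw [hconst a h₁ h₂, htop, topBoundary_of_mem_Icc h₁ h₂]

lemma IsBoundary.raiseAt_add_one_lt (hm : 0 < m) (hl : 0 < l) (hD : IsBoundary m l D) (j : ℤ) :
    Cylindric.raiseAt m j D (j + 1) < Cylindric.raiseAt m j D j := by
  have := hD.antitone (le_add_of_nonneg_right zero_le_one : j ≤ j + 1)
  simp only [Cylindric.raiseAt, sub_self, dvd_zero, if_true, add_sub_cancel_left]
  split_ifs with h
  -- for `m = 1` the column `j + 1` is raised too
  · obtain rfl := Int.eq_one_of_dvd_one hm.le h
    have := hD.quasiPeriodic j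
    omega
  · omega

theorem IsBoundary.mem_pExcitedSet {D : ℤ → ℤ} (hm : 0 < m) (hl : 0 < l) (hD : IsBoundary m l D) :
    hypograph (topBoundary m l) \ stairPath D ∈
      PExcitedSet (m, -l) (hypograph (topBoundary m l))
        (hypograph (topBoundary m l) \ stairPath (topBoundary m l)) := by
  by_cases hne : D = topBoundary m l
  · rw [hne]
    exact Relation.ReflTransGen.refl
  obtain ⟨j, hj, hdesc, htop⟩ := hD.exists_raise hm hl hne
  have hE := hD.raiseAt hm hdesc htop
  have hstep := hE.pExciteStep_lowerAt hm (hD.raiseAt_add_one_lt hm hl j)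
  rw [lowerAt_raiseAt] at hstep
  have := defect_raiseAt (l := l) hj D
  have := hE.defect_nonneg hm
  exact (hE.mem_pExcitedSet hm hl).tail hstep
termination_by (defect m l D).toNat
decreasing_by omega

theorem pExcitedSet_eq (hm : 0 < m) (hl : 0 < l) :
    PExcitedSet (m, -l) (hypograph (topBoundary m l))
        (hypograph (topBoundary m l) \ stairPath (topBoundary m l)) =
      {E | ∃ D, IsBoundary m l D ∧ E = hypograph (topBoundary m l) \ stairPath D} := by
  ext E
  constructor
  · intro h
    induction h with
    | refl => exact ⟨_, isBoundary_topBoundary hm hl.le, rfl⟩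
    | tail _ hstep ih =>
      obtain ⟨D, hD, rfl⟩ := ih
      exact hD.exists_of_pExciteStep hm hstep
  · rintro ⟨D, hD, rfl⟩
    exact hD.mem_pExcitedSet hm hl

end Cylindric

open Cylindric

/-- **Corollary 7.5**: for `λ = ((ℓ+1)^m)` and `μ = (ℓ^{m−1},0)` in `P_{m,ℓ}`, the map
`p ↦ λ̂ ∖ π(p)` is a bijection from `⨆_{i≥0} L((1,ℓ+1−i),(m,1−i))` onto the set of
cylindric excited diagrams of `μ̂` in `λ̂`. -/
theorem cyl_excited_diagrams_from_lattice_paths (l m : ℕ) (hl : 1 ≤ l) (hm : 1 ≤ m) :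
    Function.Injective
      (fun z : Σ i : ℕ, ↥(LPath ((1 : ℤ), (l : ℤ) + 1 - (i : ℤ)) ((m : ℤ), 1 - (i : ℤ))) =>
        cylDiag m l (fun _ => (l : ℤ) + 1) \
          (pr ((m : ℤ), -(l : ℤ)) '' (z.2 : Set Cell))) ∧
    Set.range
      (fun z : Σ i : ℕ, ↥(LPath ((1 : ℤ), (l : ℤ) + 1 - (i : ℤ)) ((m : ℤ), 1 - (i : ℤ))) =>
        cylDiag m l (fun _ => (l : ℤ) + 1) \
          (pr ((m : ℤ), -(l : ℤ)) '' (z.2 : Set Cell))) =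
      CylExcitedSet ((m : ℤ), -(l : ℤ)) (perDiag m l (fun _ => (l : ℤ) + 1))
        (perDiag m l (fun a => if a = (m : ℤ) then 0 else (l : ℤ))) := by
  have hm' : (0 : ℤ) < m := by omega
  have hl' : (0 : ℤ) < l := by omega
  have hΛ : perDiag m l (fun _ => (l : ℤ) + 1) = hypograph (topBoundary m l) := perDiag_eq hm' _
  simp only [CylExcitedSet, cylDiag, perDiag_mu_eq hm' hl'.le, hΛ, pExcitedSet_eq hm' hl']
  have hpath (i : ℕ) {S} := mem_LPath_iff_isBoundary (l := l) hm' (S := S) (Int.natCast_nonneg i)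
  refine ⟨fun ⟨i₁, S₁, hS₁⟩ ⟨i₂, S₂, hS₂⟩ h => ?_, ?_⟩
  · obtain ⟨D₁, hD₁, -, rfl⟩ := (hpath i₁).1 hS₁
    obtain ⟨D₂, hD₂, -, rfl⟩ := (hpath i₂).1 hS₂
    have hS := eq_of_image_pr_compl_eq hm'
      (Set.inter_subset_inter_left _ (hD₁.stairPath_subset hm'))
      (Set.inter_subset_inter_left _ (hD₂.stairPath_subset hm')) h
    have hstart := start_eq_of_mem_LPath hS₁ (hS ▸ hS₂)
    obtain rfl : i₁ = i₂ := by simp only [Prod.mk.injEq, true_and] at hstart; omega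
    simp only [hS]
  · ext X
    constructor
    · rintro ⟨⟨i, S, hS⟩, rfl⟩
      obtain ⟨D, hD, -, rfl⟩ := (hpath i).1 hS
      exact ⟨_, ⟨D, hD, rfl⟩, image_pr_compl_stairPath hm' hD.quasiPeriodic⟩
    · rintro ⟨_, ⟨D, hD, rfl⟩, rfl⟩
      obtain ⟨i, hi⟩ : ∃ i : ℕ, D 1 = l + 1 - i :=
        ⟨(l + 1 - D 1).toNat, by have := hD.le_top; omega⟩
      exact ⟨⟨i, _, (hpath i).2 ⟨D, hD, hi, rfl⟩⟩,
        (image_pr_compl_stairPath hm' hD.quasiPeriodic).symm⟩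
end

section
/- For all integers ℓ,m,s ≥ 1, F_{(ℓ,m;s)} = (s−1)!/(ℓ+m+s−2)! · binom(ℓ+m−2, m−1). -/
open scoped BigOperators

/-- The finite sum `F_{(ℓ,m;s)} = Σ_{p ∈ L((1,ℓ+1),(m,2))} Π_{x ∈ p} 1/(h_{m,ℓ}(x)+s−1)`,
where `h_{m,ℓ}(a,b) = ℓ+m−a−b+2`. -/
noncomputable def Fσ (l m s : ℕ) : ℝ :=
  ∑ᶠ p ∈ LPath ((1 : ℤ), (l : ℤ) + 1) ((m : ℤ), 2),
    ∏ᶠ x ∈ p, (((l : ℝ) + (m : ℝ) - ((x.1 : ℤ) : ℝ) - ((x.2 : ℤ) : ℝ) + 2 + (s : ℝ) - 1))⁻¹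

/-!
Expanding a path by its first step gives the recursion
`Σ_{u → v} = w(u) · (Σ_{u+(1,0) → v} + Σ_{u+(0,-1) → v})`. For the weight `x ↦ 1/(c - x.1 - x.2)`
and a box with `p` columns and `q` rows to go, the starting cell has weight `1/(a + 1 + p)`, where
`a + 1` is the weight denominator at the corner `(v.1, u.2)`; a right step lowers `p` and a down step
raises `a`. The closed form `a! (p+q)! / ((a+p+q+1)! p! q!)` obeys the same recursion because
`p (a+p+q+1) + q (a+1) = (p+q)(a+1+p)`, so induction on `p` and `q` gives the formula.
-/

lemma stepRel_iff {a b : Cell} : stepRel a b ↔ b = a + (1, 0) ∨ b = a + (0, -1) := by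
  simp only [stepRel, sub_eq_iff_eq_add']

lemma isLatticePathList_iff {u v : Cell} {p : List Cell} :
    IsLatticePathList u v p ↔ p.head? = some u ∧ p.getLast? = some v ∧ p.IsChain stepRel :=
  Iff.rfl

lemma isLatticePathList_singleton {u v a : Cell} :
    IsLatticePathList u v [a] ↔ a = u ∧ a = v := by
  simp [isLatticePathList_iff, eq_comm]

lemma isLatticePathList_cons_cons {u v a b : Cell} {t : List Cell} :
    IsLatticePathList u v (a :: b :: t) ↔
      a = u ∧ stepRel a b ∧ IsLatticePathList b v (b :: t) := by
  simp only [isLatticePathList_iff, List.isChain_cons_cons, List.head?_cons,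
    List.getLast?_cons_cons, Option.some.injEq]
  tauto

lemma IsLatticePathList.bounds {u v : Cell} {p : List Cell} (hp : IsLatticePathList u v p)
    {x : Cell} (hx : x ∈ p) : u.1 ≤ x.1 ∧ x.1 ≤ v.1 ∧ v.2 ≤ x.2 ∧ x.2 ≤ u.2 := by
  induction p generalizing u x with
  | nil => simp at hx
  | cons a t ih =>
    match t, hp with
    | [], hp =>
      obtain ⟨rfl, rfl⟩ := isLatticePathList_singleton.mp hp
      obtain rfl := List.mem_singleton.mp hx
      omega
    | b :: t, hp =>
      obtain ⟨rfl, hab, hb⟩ := isLatticePathList_cons_cons.mp hp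
      have hstep : (b.1 = a.1 + 1 ∧ b.2 = a.2) ∨ (b.1 = a.1 ∧ b.2 = a.2 - 1) := by
        rcases stepRel_iff.mp hab with rfl | rfl <;> simp [sub_eq_add_neg]
      have hbv := ih hb List.mem_cons_self
      rcases List.mem_cons.mp hx with rfl | hx
      · omega
      · have := ih hb hx
        omega

lemma bounds_of_mem_LPath {u v : Cell} {S : Set Cell} (hS : S ∈ LPath u v) {x : Cell}
    (hx : x ∈ S) : u.1 ≤ x.1 ∧ x.1 ≤ v.1 ∧ v.2 ≤ x.2 ∧ x.2 ≤ u.2 := by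
  obtain ⟨p, hp, rfl⟩ := hS
  exact hp.bounds hx

lemma start_mem_of_mem_LPath {u v : Cell} {S : Set Cell} (hS : S ∈ LPath u v) : u ∈ S := by
  obtain ⟨p, hp, rfl⟩ := hS
  exact List.mem_of_mem_head? hp.1

lemma finite_of_mem_LPath {u v : Cell} {S : Set Cell} (hS : S ∈ LPath u v) : S.Finite := by
  obtain ⟨p, -, rfl⟩ := hS
  exact p.finite_toSet

lemma LPath_finite (u v : Cell) : (LPath u v).Finite := by
  refine (Set.finite_Icc ((u.1, v.2) : Cell) (v.1, u.2)).finite_subsets.subset fun S hS x hx => ?_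
  have := bounds_of_mem_LPath hS hx
  simp only [Set.mem_Icc, Prod.le_def]
  omega

lemma LPath_eq_empty {u v : Cell} (h : v.1 < u.1 ∨ u.2 < v.2) : LPath u v = ∅ :=
  Set.eq_empty_of_forall_notMem fun _ hS => by
    have := bounds_of_mem_LPath hS (start_mem_of_mem_LPath hS)
    omega

lemma LPath_self (u : Cell) : LPath u u = {{u}} := by
  ext S
  constructor
  · rintro ⟨_ | ⟨a, _ | ⟨b, t⟩⟩, hp, rfl⟩
    · simp [isLatticePathList_iff] at hp
    · obtain ⟨rfl, -⟩ := isLatticePathList_singleton.mp hp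
      simp
    · obtain ⟨rfl, hab, hb⟩ := isLatticePathList_cons_cons.mp hp
      have := hb.bounds List.mem_cons_self
      rcases stepRel_iff.mp hab with rfl | rfl <;> simp at this
  · rintro rfl
    exact ⟨[u], isLatticePathList_singleton.mpr ⟨rfl, rfl⟩, by simp⟩

lemma insert_mem_LPath {u w v : Cell} (huw : stepRel u w) {T : Set Cell} (hT : T ∈ LPath w v) :
    insert u T ∈ LPath u v := by
  obtain ⟨_ | ⟨b, t⟩, hq, rfl⟩ := hT
  · simp [isLatticePathList_iff] at hq
  · obtain rfl : b = w := by simpa [isLatticePathList_iff] using hq.1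
    exact ⟨u :: b :: t, isLatticePathList_cons_cons.mpr ⟨rfl, huw, hq⟩, by ext; simp⟩

lemma LPath_eq_image_insert {u v : Cell} (h : u ≠ v) :
    LPath u v = insert u '' (LPath (u + (1, 0)) v ∪ LPath (u + (0, -1)) v) := by
  ext S
  constructor
  · rintro ⟨_ | ⟨a, _ | ⟨b, t⟩⟩, hp, rfl⟩
    · simp [isLatticePathList_iff] at hp
    · obtain ⟨rfl, rfl⟩ := isLatticePathList_singleton.mp hp
      exact absurd rfl h
    · obtain ⟨rfl, hab, hb⟩ := isLatticePathList_cons_cons.mp hp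
      refine ⟨{x | x ∈ b :: t}, ?_, by ext; simp⟩
      rcases stepRel_iff.mp hab with rfl | rfl
      exacts [Or.inl ⟨_, hb, rfl⟩, Or.inr ⟨_, hb, rfl⟩]
  · rintro ⟨T, hT | hT, rfl⟩
    exacts [insert_mem_LPath (stepRel_iff.mpr (Or.inl rfl)) hT,
      insert_mem_LPath (stepRel_iff.mpr (Or.inr rfl)) hT]

lemma start_notMem_of_mem_LPath_step {u w v : Cell} (huw : stepRel u w) {S : Set Cell}
    (hS : S ∈ LPath w v) : u ∉ S := fun hu => by
  have := bounds_of_mem_LPath hS hu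
  rcases stepRel_iff.mp huw with rfl | rfl <;> simp at this

noncomputable def pathSum (f : Cell → ℝ) (u v : Cell) : ℝ :=
  ∑ᶠ S ∈ LPath u v, ∏ᶠ x ∈ S, f x

lemma pathSum_self (f : Cell → ℝ) (u : Cell) : pathSum f u u = f u := by
  simp [pathSum, LPath_self]

lemma pathSum_eq_zero {f : Cell → ℝ} {u v : Cell} (h : v.1 < u.1 ∨ u.2 < v.2) :
    pathSum f u v = 0 := by
  simp [pathSum, LPath_eq_empty h]

lemma pathSum_of_ne (f : Cell → ℝ) {u v : Cell} (h : u ≠ v) :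
    pathSum f u v = f u * (pathSum f (u + (1, 0)) v + pathSum f (u + (0, -1)) v) := by
  have hright : stepRel u (u + (1, 0)) := stepRel_iff.mpr (Or.inl rfl)
  have hdown : stepRel u (u + (0, -1)) := stepRel_iff.mpr (Or.inr rfl)
  have hnotMem : ∀ S ∈ LPath (u + (1, 0)) v ∪ LPath (u + (0, -1)) v, u ∉ S := by
    rintro S (hS | hS)
    exacts [start_notMem_of_mem_LPath_step hright hS, start_notMem_of_mem_LPath_step hdown hS]
  have hinj : Set.InjOn (insert u) (LPath (u + (1, 0)) v ∪ LPath (u + (0, -1)) v) :=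
    fun S hS T hT hST => by
      rw [← Set.insert_sdiff_self_of_notMem (hnotMem S hS),
        ← Set.insert_sdiff_self_of_notMem (hnotMem T hT), hST]
  have hdisj : Disjoint (LPath (u + (1, 0)) v) (LPath (u + (0, -1)) v) :=
    Set.disjoint_left.mpr fun S hS hS' => by
      have := bounds_of_mem_LPath hS (start_mem_of_mem_LPath hS')
      simp at this
  rw [pathSum, LPath_eq_image_insert h, finsum_mem_image hinj,
    finsum_mem_congr rfl fun S hS => finprod_mem_insert f (hnotMem S hS)
      (by rcases hS with hS | hS <;> exact finite_of_mem_LPath hS),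
    finsum_mem_union hdisj (LPath_finite _ _) (LPath_finite _ _),
    ← mul_finsum_mem, ← mul_finsum_mem, mul_add, pathSum, pathSum]

section ClosedForm

open Nat

noncomputable def pathSumClosedForm (p q a : ℕ) : ℝ :=
  (a ! : ℝ) / (a + 1 + p + q)! * ((p + q).choose p : ℝ)

lemma pathSumClosedForm_eq (p q a : ℕ) :
    pathSumClosedForm p q a = a ! * (p + q)! / ((a + 1 + p + q)! * p ! * q !) := by
  rw [pathSumClosedForm, Nat.cast_add_choose]
  field_simp

lemma pathSumClosedForm_zero_zero (a : ℕ) : pathSumClosedForm 0 0 a = ((a : ℝ) + 1)⁻¹ := by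
  rw [pathSumClosedForm_eq, add_zero, add_zero, factorial_succ]
  push_cast
  field_simp
  simp

lemma pathSumClosedForm_succ_zero (p a : ℕ) :
    pathSumClosedForm (p + 1) 0 a = ((a : ℝ) + 1 + (p + 1))⁻¹ * pathSumClosedForm p 0 a := by
  simp only [pathSumClosedForm_eq, add_zero, ← add_assoc, factorial_succ]
  push_cast
  field_simp

lemma pathSumClosedForm_zero_succ (q a : ℕ) :
    pathSumClosedForm 0 (q + 1) a = ((a : ℝ) + 1)⁻¹ * pathSumClosedForm 0 q (a + 1) := by
  simp only [pathSumClosedForm_eq, add_zero, zero_add,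
    show a + 1 + (q + 1) = a + 1 + q + 1 by ring, show a + 1 + 1 + q = a + 1 + q + 1 by ring,
    factorial_succ]
  push_cast
  field_simp

lemma pathSumClosedForm_succ_succ (p q a : ℕ) :
    pathSumClosedForm (p + 1) (q + 1) a = ((a : ℝ) + 1 + (p + 1))⁻¹ *
      (pathSumClosedForm p (q + 1) a + pathSumClosedForm (p + 1) q (a + 1)) := by
  simp only [pathSumClosedForm_eq, show a + 1 + (p + 1) + (q + 1) = a + 1 + p + q + 1 + 1 by ring,
    show a + 1 + 1 + (p + 1) + q = a + 1 + p + q + 1 + 1 by ring,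
    show a + 1 + p + (q + 1) = a + 1 + p + q + 1 by ring,
    show p + 1 + (q + 1) = p + q + 1 + 1 by ring, show p + (q + 1) = p + q + 1 by ring,
    show p + 1 + q = p + q + 1 by ring, factorial_succ]
  push_cast
  field_simp
  ring

end ClosedForm

theorem pathSum_inv_eq_pathSumClosedForm (c : ℤ) (p : ℕ) : ∀ (q a : ℕ) (u v : Cell),
    v.1 = u.1 + p → v.2 = u.2 - q → c = u.1 + u.2 + a + 1 + p →
    pathSum (fun x => ((c : ℝ) - x.1 - x.2)⁻¹) u v = pathSumClosedForm p q a := by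
  induction p with
  | zero =>
    intro q
    induction q with
    | zero =>
      intro a u v hv1 hv2 hc
      obtain rfl : v = u := Prod.ext (by simpa using hv1) (by simpa using hv2)
      rw [pathSum_self, pathSumClosedForm_zero_zero, hc]
      push_cast
      ring_nf
    | succ q ihq =>
      intro a u v hv1 hv2 hc
      rw [pathSum_of_ne _ (by rintro rfl; omega),
        pathSum_eq_zero (u := u + (1, 0)) (by simp; omega),
        ihq (a + 1) _ v (by simp; omega) (by simp; omega) (by simp; omega),
        pathSumClosedForm_zero_succ, zero_add, hc]
      push_cast
      ring_nf
  | succ p ihp =>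
    intro q
    induction q with
    | zero =>
      intro a u v hv1 hv2 hc
      rw [pathSum_of_ne _ (by rintro rfl; omega),
        pathSum_eq_zero (u := u + (0, -1)) (by simp; omega),
        ihp 0 a _ v (by simp; omega) (by simp; omega) (by simp; omega),
        pathSumClosedForm_succ_zero, add_zero, hc]
      push_cast
      ring_nf
    | succ q ihq =>
      intro a u v hv1 hv2 hc
      rw [pathSum_of_ne _ (by rintro rfl; omega),
        ihp (q + 1) a _ v (by simp; omega) (by simp; omega) (by simp; omega),
        ihq (a + 1) _ v (by simp; omega) (by simp; omega) (by simp; omega),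
        pathSumClosedForm_succ_succ, hc]
      push_cast
      ring_nf

/-- **Lemma 7.6**: `F_{(ℓ,m;s)} = (s−1)!/(ℓ+m+s−2)! · C(ℓ+m−2, m−1)`. -/
theorem F_lms_formula (l m s : ℕ) (hl : 1 ≤ l) (hm : 1 ≤ m) (hs : 1 ≤ s) :
    Fσ l m s =
      ((s - 1).factorial : ℝ) / ((l + m + s - 2).factorial : ℝ) *
        ((l + m - 2).choose (m - 1) : ℝ) := by
  have hF : Fσ l m s =
      pathSum (fun x => (((l + m + s + 1 : ℤ) : ℝ) - x.1 - x.2)⁻¹) (1, l + 1) (m, 2) := by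
    refine finsum_mem_congr rfl fun S _ => finprod_mem_congr rfl fun x _ => ?_
    push_cast
    ring_nf
  rw [hF, pathSum_inv_eq_pathSumClosedForm _ (m - 1) (l - 1) (s - 1) _ _
      (by simp; omega) (by simp; omega) (by simp; omega),
    pathSumClosedForm, show s - 1 + 1 + (m - 1) + (l - 1) = l + m + s - 2 by omega,
    show m - 1 + (l - 1) = l + m - 2 by omega]
end

section
/- Let ℓ,m ≥ 1 and λ = ((ℓ+1)^m) ∈ P_{m,ℓ}. For any cell x = (a,b′) ∈ λ̄ (so 1 ≤ a ≤ m and b′ ≤ ℓ+1), writing b′ = b − dℓ with 2 ≤ b ≤ ℓ+1 and d ≥ 0, the cylindric hook length satisfies h_{λ̂}(π(x)) = h^{1,ℓ+m}_{m,ℓ}(x) = ℓ+m−a−b+d(ℓ+m)+2. -/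
open scoped BigOperators

section Aux

lemma mem_perDiag_iff {m l : ℤ} (hm : 0 < m) (p : Cell) :
    p ∈ perDiag m l (fun _ => l + 1) ↔ p.2 + l * ((p.1 - 1) / m) ≤ l + 1 := by
  constructor
  · rintro ⟨y, ⟨hy1, hy2, hy3⟩, k, rfl⟩
    have h1 : (y + k • ((m:ℤ), -l)).1 = y.1 + k * m := by
      simp [Prod.smul_fst, zsmul_eq_mul]
    have h2 : (y + k • ((m:ℤ), -l)).2 = y.2 - k * l := by
      simp [Prod.smul_snd, zsmul_eq_mul]; ring
    rw [h1, h2]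
    have : (y.1 + k * m - 1) / m = (y.1 - 1) / m + k := by
      rw [show y.1 + k * m - 1 = (y.1 - 1) + k * m by ring, Int.add_mul_ediv_right _ _ hm.ne']
    rw [this, Int.ediv_eq_zero_of_lt (by omega) (by omega)]
    simp only at hy3
    nlinarith
  · intro h
    set k := (p.1 - 1) / m with hk
    have hmod : p.1 - 1 - m * k = (p.1 - 1) % m := by rw [Int.emod_def]
    have h0 : 0 ≤ (p.1 - 1) % m := Int.emod_nonneg _ hm.ne'
    have h1 : (p.1 - 1) % m < m := Int.emod_lt_of_pos _ hm
    have hcm : m * k = k * m := mul_comm m k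
    have hsm : k • ((m:ℤ), -l) = (k * m, -(k * l)) := by
      have h' : k • ((m:ℤ), -l) = (k • (m:ℤ), k • (-l)) := rfl
      rw [h', smul_eq_mul, smul_eq_mul, Prod.mk.injEq]
      exact ⟨rfl, by ring⟩
    refine ⟨(p.1 - k * m, p.2 + k * l), ⟨by omega, by omega, by
      show p.2 + k * l ≤ l + 1; rw [mul_comm]; linarith⟩, k, ?_⟩
    rw [hsm]
    simp [Prod.ext_iff]

lemma perDiag_shift {m l : ℤ} (hm : 0 < m) (p : Cell) (c : ℤ) :
    p + c • ((m:ℤ), -l) ∈ perDiag m l (fun _ => l + 1) ↔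
      p ∈ perDiag m l (fun _ => l + 1) := by
  rw [mem_perDiag_iff hm, mem_perDiag_iff hm]
  have h1 : (p + c • ((m:ℤ), -l)).1 = p.1 + c * m := by
    simp [Prod.smul_fst, zsmul_eq_mul]
  have h2 : (p + c • ((m:ℤ), -l)).2 = p.2 - c * l := by
    simp [Prod.smul_snd, zsmul_eq_mul]; ring
  rw [h1, h2, show p.1 + c * m - 1 = (p.1 - 1) + c * m by ring,
    Int.add_mul_ediv_right _ _ hm.ne']
  constructor <;> intro <;> nlinarith

lemma hookLen_shift (Θ : Set Cell) (w x : Cell) (hΘ : ∀ p : Cell, p + w ∈ Θ ↔ p ∈ Θ) :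
    hookLen Θ (x + w) = hookLen Θ x := by
  have him : hookSet Θ (x + w) = (· + w) '' hookSet Θ x := by
    ext y
    simp only [hookSet, Set.mem_inter_iff, Set.mem_union, Set.mem_setOf_eq, Set.mem_image]
    constructor
    · rintro ⟨hy, hray⟩
      refine ⟨y - w, ⟨(hΘ (y - w)).mp (by simpa using hy), ?_⟩, by abel⟩
      rcases hray with ⟨k, hk, hkk⟩ | ⟨k, hk, hkk⟩
      · exact Or.inl ⟨k, hk, by rw [hkk]; abel⟩
      · exact Or.inr ⟨k, hk, by rw [hkk]; abel⟩
    · rintro ⟨z, ⟨hz, hray⟩, rfl⟩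
      refine ⟨(hΘ z).mpr hz, ?_⟩
      rcases hray with ⟨k, hk, hkk⟩ | ⟨k, hk, hkk⟩
      · exact Or.inl ⟨k, hk, by rw [hkk]; abel⟩
      · exact Or.inr ⟨k, hk, by rw [hkk]; abel⟩
  rw [hookLen, hookLen, him,
    Set.ncard_image_of_injective _ (add_left_injective w)]

lemma cylHook_eq_hookLen {m l : ℤ} (hm : 0 < m) (x : Cell) :
    cylHook ((m:ℤ), -l) (perDiag m l (fun _ => l + 1)) (pr ((m:ℤ), -l) x) =
      hookLen (perDiag m l (fun _ => l + 1)) x := by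
  set ω : Cell := ((m:ℤ), -l)
  set y := Quotient.out (pr ω x) with hy
  have hq : pr ω y = pr ω x := Quotient.out_eq _
  have : -y + x ∈ AddSubgroup.zmultiples ω := by
    rwa [pr, QuotientAddGroup.eq] at hq
  obtain ⟨c, hc⟩ := AddSubgroup.mem_zmultiples_iff.mp this
  have hx : x = y + c • ω := by
    have := hc
    rw [this]; abel
  rw [cylHook, ← hy, hx, hookLen_shift]
  intro p
  exact perDiag_shift hm p c

end Aux

section Aux2

lemma leg_cond {l m a b d k : ℤ} (hl : 1 ≤ l) (hm : 1 ≤ m) (ha1 : 1 ≤ a)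
    (hb1 : 2 ≤ b) (hb2 : b ≤ l + 1) (hd : 0 ≤ d) (hk : 0 ≤ k) :
    (b - d * l + l * ((a + k - 1) / m) ≤ l + 1) ↔ k ≤ d * m + m - a := by
  set q := (a + k - 1) / m with hq
  have hq0 : 0 ≤ q := Int.ediv_nonneg (by omega) (by omega)
  have hiff : q < d + 1 ↔ a + k - 1 < (d + 1) * m := Int.ediv_lt_iff_lt_mul (by omega)
  have hexp : (d + 1) * m = d * m + m := by ring
  have hexp2 : l * (d + 1) = d * l + l := by ring
  have hexp3 : l * d = d * l := by ring
  constructor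
  · intro h
    have hqd : q ≤ d := by
      by_contra hc
      push_neg at hc
      have h2 : l * (d + 1) ≤ l * q := mul_le_mul_of_nonneg_left (by omega) (by omega)
      linarith
    have h3 : a + k - 1 < (d + 1) * m := hiff.mp (by omega)
    linarith
  · intro h
    have h3 : a + k - 1 < (d + 1) * m := by linarith
    have hqd : q ≤ d := by have := hiff.mpr h3; omega
    have h4 : l * q ≤ l * d := mul_le_mul_of_nonneg_left hqd (by omega)
    linarith

lemma hookSet_hook (l m a b d : ℤ) (hl : 1 ≤ l) (hm : 1 ≤ m) (ha1 : 1 ≤ a) (ha2 : a ≤ m)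
    (hb1 : 2 ≤ b) (hb2 : b ≤ l + 1) (hd : 0 ≤ d) :
    hookSet (perDiag m l (fun _ => l + 1)) (a, b - d * l) =
      ((fun k => ((a + k, b - d * l) : Cell)) '' Set.Icc (0:ℤ) (d * m + m - a)) ∪
      ((fun k => ((a, b - d * l + k) : Cell)) '' Set.Icc (1:ℤ) (l + 1 - (b - d * l))) := by
  have hm0 : (0:ℤ) < m := by omega
  ext y
  simp only [hookSet, Set.mem_inter_iff, Set.mem_union, Set.mem_setOf_eq, Set.mem_image,
    Set.mem_Icc, mem_perDiag_iff hm0]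
  constructor
  · rintro ⟨hΘ, ⟨k, hk, rfl⟩ | ⟨k, hk, rfl⟩⟩
    · left
      refine ⟨k, ⟨hk, ?_⟩, by simp [Prod.ext_iff]⟩
      have h1 : ((a, b - d * l) + ((k:ℤ), (0:ℤ))).1 = a + k := rfl
      have h2 : ((a, b - d * l) + ((k:ℤ), (0:ℤ))).2 = b - d * l := by
        show b - d * l + 0 = b - d * l; ring
      rw [h1, h2] at hΘ
      exact (leg_cond hl hm ha1 hb1 hb2 hd hk).mp hΘ
    · right
      refine ⟨k, ⟨hk, ?_⟩, by simp [Prod.ext_iff]⟩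
      have h1 : ((a, b - d * l) + ((0:ℤ), (k:ℤ))).1 = a := by
        show a + 0 = a; ring
      have h2 : ((a, b - d * l) + ((0:ℤ), (k:ℤ))).2 = b - d * l + k := rfl
      rw [h1, h2, Int.ediv_eq_zero_of_lt (by omega) (by omega)] at hΘ
      omega
  · rintro (⟨k, ⟨hk0, hk1⟩, rfl⟩ | ⟨k, ⟨hk0, hk1⟩, rfl⟩)
    · refine ⟨?_, Or.inl ⟨k, hk0, by simp [Prod.ext_iff]⟩⟩
      show b - d * l + l * ((a + k - 1) / m) ≤ l + 1
      exact (leg_cond hl hm ha1 hb1 hb2 hd hk0).mpr hk1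
    · refine ⟨?_, Or.inr ⟨k, hk0, by simp [Prod.ext_iff]⟩⟩
      show b - d * l + k + l * ((a - 1) / m) ≤ l + 1
      rw [Int.ediv_eq_zero_of_lt (by omega) (by omega)]
      omega

end Aux2

/-- **Equation (7.7)**: for `λ = ((ℓ+1)^m)`, the cylindric hook length of the cell
`x = (a, b−dℓ) ∈ λ̄` (with `1 ≤ a ≤ m`, `2 ≤ b ≤ ℓ+1`, `d ≥ 0`) is
`h_{λ̂}(π(x)) = h^{1,ℓ+m}_{m,ℓ}(x) = ℓ+m−a−b+d(ℓ+m)+2`. -/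
theorem hook_case_cylindric_hook_lengths (l m : ℕ) (hl : 1 ≤ l) (hm : 1 ≤ m)
    (a b d : ℤ) (ha1 : 1 ≤ a) (ha2 : a ≤ (m : ℤ)) (hb1 : 2 ≤ b) (hb2 : b ≤ (l : ℤ) + 1)
    (hd : 0 ≤ d) :
    ((cylHook ((m : ℤ), -(l : ℤ)) (perDiag m l (fun _ => (l : ℤ) + 1))
        (pr ((m : ℤ), -(l : ℤ)) (a, b - d * (l : ℤ)))) : ℤ) =
      (l : ℤ) + (m : ℤ) - a - b + d * ((l : ℤ) + (m : ℤ)) + 2 ∧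
    hst (m : ℤ) (l : ℤ) 1 ((l : ℤ) + (m : ℤ)) (a, b - d * (l : ℤ)) =
      (l : ℤ) + (m : ℤ) - a - b + d * ((l : ℤ) + (m : ℤ)) + 2 := by
  have hm0 : (0:ℤ) < (m:ℤ) := by exact_mod_cast hm
  have hl0 : (1:ℤ) ≤ (l:ℤ) := by exact_mod_cast hl
  have hdm : 0 ≤ d * (m:ℤ) := mul_nonneg hd (by omega)
  have hdl : 0 ≤ d * (l:ℤ) := mul_nonneg hd (by omega)
  constructor
  · rw [cylHook_eq_hookLen hm0, hookLen,
      hookSet_hook (l:ℤ) (m:ℤ) a b d hl0 (by omega) ha1 ha2 hb1 hb2 hd]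
    have hinj1 : Function.Injective (fun k : ℤ => ((a + k, b - d * (l:ℤ)) : Cell)) := by
      intro x y h; simp only [Prod.mk.injEq] at h; omega
    have hinj2 : Function.Injective (fun k : ℤ => ((a, b - d * (l:ℤ) + k) : Cell)) := by
      intro x y h; simp only [Prod.mk.injEq] at h; omega
    have hdisj : Disjoint
        ((fun k : ℤ => ((a + k, b - d * (l:ℤ)) : Cell)) '' Set.Icc (0:ℤ) (d * m + m - a))
        ((fun k : ℤ => ((a, b - d * (l:ℤ) + k) : Cell)) ''
          Set.Icc (1:ℤ) ((l:ℤ) + 1 - (b - d * l))) := by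
      rw [Set.disjoint_left]
      rintro y ⟨k, ⟨hk0, _⟩, rfl⟩ ⟨j, ⟨hj0, _⟩, hj⟩
      simp only [Prod.mk.injEq] at hj
      omega
    rw [Set.ncard_union_eq hdisj ((Set.finite_Icc _ _).image _) ((Set.finite_Icc _ _).image _),
      Set.ncard_image_of_injective _ hinj1, Set.ncard_image_of_injective _ hinj2,
      ← Finset.coe_Icc, ← Finset.coe_Icc, Set.ncard_coe_finset, Set.ncard_coe_finset,
      Int.card_Icc, Int.card_Icc]
    push_cast [Int.toNat_of_nonneg (by omega : (0:ℤ) ≤ d * m + m - a + 1 - 0),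
      Int.toNat_of_nonneg (by omega : (0:ℤ) ≤ (l:ℤ) + 1 - (b - d * l) + 1 - 1)]
    ring
  · have hdiv : ((l:ℤ) + 1 - (b - d * l)) / l = d := by
      rw [show (l:ℤ) + 1 - (b - d * l) = (l + 1 - b) + d * l by ring,
        Int.add_mul_ediv_right _ _ (by omega : (l:ℤ) ≠ 0),
        Int.ediv_eq_zero_of_lt (by omega) (by omega)]
      ring
    simp only [hst]
    rw [hdiv]
    ring
end

section
/- For all integers ℓ,s,t ≥ 1, F_{(ℓ,1;s,t)} = 1/(t · s(s+1)⋯(s+ℓ−1)). -/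
open scoped BigOperators

/-- The index type of the sum defining `F_{(ℓ,m;s,t)}`: pairs of an `i ≥ 0` and a
lattice path in `L((1,ℓ+1−i),(m,1−i))`. -/
def FstIndex (l m : ℕ) : Type :=
  Σ i : ℕ, ↥(LPath ((1 : ℤ), (l : ℤ) + 1 - (i : ℤ)) ((m : ℤ), 1 - (i : ℤ)))

/-- The summand `Π_{x ∈ p} 1/h^{s,t}_{m,ℓ}(x)`. -/
noncomputable def FstTerm (l m s t : ℕ) (z : FstIndex l m) : ℝ :=
  ∏ᶠ x ∈ (z.2 : Set Cell), ((hst (m : ℤ) (l : ℤ) (s : ℤ) (t : ℤ) x : ℝ))⁻¹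

/-- `F_{(ℓ,m;s,t)} = Σ_{i=0}^∞ Σ_{p ∈ L((1,ℓ+1−i),(m,1−i))} Π_{x ∈ p} 1/h^{s,t}_{m,ℓ}(x)`. -/
noncomputable def Fst (l m s t : ℕ) : ℝ := ∑' z : FstIndex l m, FstTerm l m s t z


/-!
For `m = 1` the only lattice path from `(1, ℓ+1-i)` to `(1, 1-i)` is the vertical segment of
`ℓ + 1` cells, and on its cell `(1, ℓ+1-j)` the hook value is
`g j = s + j % ℓ + t * (j / ℓ)` (`columnHook`). Since `g (j + ℓ) = g j + t`, the `i`-th summand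
`∏_{k ≤ ℓ} 1 / g (i + k)` equals `(q i - q (i + 1)) / t` with `q i = ∏_{k < ℓ} 1 / g (i + k)`,
and `q i → 0`, so the series telescopes to `q 0 / t = 1 / (t · s (s+1) ⋯ (s+ℓ-1))`.
-/

open Filter Topology Finset

section Telescoping

variable {g : ℕ → ℝ} {l : ℕ} {t : ℝ}

theorem mul_prod_range_succ_inv_eq_sub (hg : ∀ j, g j ≠ 0) (hper : ∀ j, g (j + l) = g j + t)
    (i : ℕ) :
    t * ∏ k ∈ range (l + 1), (g (i + k))⁻¹ =
      ∏ k ∈ range l, (g (i + k))⁻¹ - ∏ k ∈ range l, (g (i + 1 + k))⁻¹ := by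
  have hlast :
      ∏ k ∈ range l, (g (i + k))⁻¹ = (∏ k ∈ range (l + 1), (g (i + k))⁻¹) * g (i + l) := by
    rw [prod_range_succ, mul_assoc, inv_mul_cancel₀ (hg _), mul_one]
  have hfirst :
      ∏ k ∈ range l, (g (i + 1 + k))⁻¹ = (∏ k ∈ range (l + 1), (g (i + k))⁻¹) * g i := by
    simp only [prod_range_succ', add_zero, ← add_assoc, add_right_comm i _ 1]
    rw [mul_assoc, inv_mul_cancel₀ (hg _), mul_one]
  rw [hlast, hfirst, hper]
  ring

theorem hasSum_prod_range_succ_inv (hg : ∀ j, 0 < g j) (hper : ∀ j, g (j + l) = g j + t)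
    (ht : t ≠ 0) (htop : Tendsto g atTop atTop) :
    HasSum (fun i ↦ ∏ k ∈ range (l + 1), (g (i + k))⁻¹) (t * ∏ k ∈ range l, g k)⁻¹ := by
  set q : ℕ → ℝ := fun i ↦ ∏ k ∈ range l, (g (i + k))⁻¹
  have hl : l ≠ 0 := by
    rintro rfl
    simpa [ht] using hper 0
  have hq : Tendsto q atTop (𝓝 0) := by
    have := tendsto_finsetProd (range l) fun k _ ↦
      tendsto_inv_atTop_zero.comp (htop.comp (tendsto_add_atTop_nat k))
    simpa [q, hl] using this
  have hpartial (n : ℕ) :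
      ∑ i ∈ range n, ∏ k ∈ range (l + 1), (g (i + k))⁻¹ = t⁻¹ * (q 0 - q n) := by
    rw [← sum_range_sub', mul_sum]
    refine sum_congr rfl fun i _ ↦ ?_
    rw [← mul_prod_range_succ_inv_eq_sub (fun j ↦ (hg j).ne') hper, inv_mul_cancel_left₀ ht]
  rw [hasSum_iff_tendsto_nat_of_nonneg fun i ↦ prod_nonneg fun k _ ↦ (inv_pos.2 (hg _)).le]
  simp_rw [hpartial]
  convert (hq.const_sub (q 0)).const_mul t⁻¹ using 2
  simp only [q, zero_add, sub_zero, mul_inv, prod_inv_distrib]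

end Telescoping

theorem stepRel_cases {a b : Cell} (h : stepRel a b) :
    b = (a.1 + 1, a.2) ∨ b = (a.1, a.2 - 1) := by
  rcases h with h | h <;> [left; right] <;>
  · simp only [Prod.ext_iff, Prod.fst_sub, Prod.snd_sub] at h ⊢
    omega

theorem setOf_mem_eq_of_isChain_stepRel :
    ∀ {p : List Cell} {c y₀ y₁ : ℤ}, p.IsChain stepRel → p.head? = some (c, y₀) →
      p.getLast? = some (c, y₁) → {x | x ∈ p} = {c} ×ˢ Set.Icc y₁ y₀
  | [], _, _, _, _, h₀, _ => by simp at h₀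
  | [a], c, y₀, y₁, _, h₀, h₁ => by
    simp only [List.head?_cons, List.getLast?_singleton, Option.some.injEq] at h₀ h₁
    subst h₀
    obtain rfl : y₀ = y₁ := (Prod.ext_iff.1 h₁).2
    ext ⟨x₁, x₂⟩
    simp only [List.mem_singleton, Set.mem_ofPred_eq, Set.mem_prod, Set.mem_singleton_iff,
      Set.mem_Icc, Prod.ext_iff]
    omega
  | a :: b :: r, c, y₀, y₁, hp, h₀, h₁ => by
    rw [List.isChain_cons_cons] at hp
    obtain rfl : a = (c, y₀) := by simpa using h₀
    have hlast : (b :: r).getLast? = some (c, y₁) := by simpa using h₁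
    have hb : b.1 ≤ c :=
      hp.2.backwards_induction (fun x ↦ x.1 ≤ c) _
        (fun x y hxy hy ↦ by rcases stepRel_cases hxy with rfl | rfl <;> dsimp at hy ⊢ <;> omega)
        (fun hne ↦ by
          rw [List.getLast?_eq_some_getLast hne, Option.some.injEq] at hlast
          rw [hlast])
        b List.mem_cons_self
    have hb' : b = (c, y₀ - 1) := by
      rcases stepRel_cases hp.1 with rfl | rfl
      · dsimp at hb; omega
      · rfl
    have ih := setOf_mem_eq_of_isChain_stepRel hp.2 (by rw [hb']; rfl) hlast
    subst hb'
    have hy : y₁ ≤ y₀ - 1 := ((Set.ext_iff.1 ih _).1 List.mem_cons_self).2.1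
    ext ⟨x₁, x₂⟩
    have hx := Set.ext_iff.1 ih (x₁, x₂)
    simp only [Set.mem_ofPred_eq, List.mem_cons] at hx ⊢
    rw [hx]
    simp only [Set.mem_prod, Set.mem_singleton_iff, Set.mem_Icc, Prod.ext_iff]
    omega

theorem LPath_of_fst_eq {c y₀ y₁ : ℤ} (h : y₁ ≤ y₀) :
    LPath (c, y₀) (c, y₁) = {{c} ×ˢ Set.Icc y₁ y₀} := by
  ext S
  constructor
  · rintro ⟨p, ⟨h₀, h₁, hp⟩, rfl⟩
    exact setOf_mem_eq_of_isChain_stepRel hp h₀ h₁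
  · rintro rfl
    obtain ⟨n, rfl⟩ : ∃ n : ℕ, y₁ = y₀ - n := ⟨(y₀ - y₁).toNat, by omega⟩
    have hp : IsLatticePathList (c, y₀) (c, y₀ - n)
        ((List.range (n + 1)).map fun k : ℕ ↦ (c, y₀ - k)) := by
      refine ⟨by simp [List.head?_range], by simp [List.getLast?_range], ?_⟩
      rw [List.Chain', List.isChain_map, List.isChain_range_succ]
      intro k _
      right
      simp only [Prod.ext_iff, Prod.fst_sub, Prod.snd_sub]
      push_cast
      constructor <;> ring
    exact ⟨_, hp, (setOf_mem_eq_of_isChain_stepRel hp.2.2 hp.1 hp.2.1).symm⟩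

theorem finprod_mem_singleton_prod_Icc {M : Type*} [CommMonoid M] (f : Cell → M) (c y : ℤ)
    (n : ℕ) : ∏ᶠ x ∈ {c} ×ˢ Set.Icc (y - n) y, f x = ∏ k ∈ range (n + 1), f (c, y - k) := by
  have hcol : {c} ×ˢ Set.Icc (y - n) y = (fun k : ℕ ↦ (c, y - k)) '' ↑(range (n + 1)) := by
    ext ⟨x₁, x₂⟩
    simp only [Set.mem_prod, Set.mem_singleton_iff, Set.mem_Icc, Set.mem_image, coe_range,
      Set.mem_Iio, Prod.ext_iff]
    constructor
    · rintro ⟨rfl, h₁, h₂⟩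
      exact ⟨(y - x₂).toNat, by omega, rfl, by omega⟩
    · rintro ⟨k, hk, rfl, rfl⟩
      omega
  rw [hcol, finprod_mem_image fun a _ b _ h ↦ by simpa using h, finprod_mem_coe_finset]

def columnHook (l s t j : ℕ) : ℕ := s + j % l + t * (j / l)

theorem hst_one_column (l s t j : ℕ) :
    hst 1 l s t (1, l + 1 - j) = columnHook l s t j := by
  have hj : (l : ℤ) * (j / l) + j % l = j := Int.mul_ediv_add_emod _ _
  simp only [hst, columnHook]
  push_cast
  rw [sub_sub_cancel]
  linear_combination -hj

theorem columnHook_add_self {l : ℕ} (hl : l ≠ 0) (s t j : ℕ) :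
    columnHook l s t (j + l) = columnHook l s t j + t := by
  simp only [columnHook, Nat.add_mod_right, Nat.add_div_right _ (Nat.pos_of_ne_zero hl)]
  ring

theorem columnHook_of_lt {l : ℕ} (s t : ℕ) {j : ℕ} (hj : j < l) : columnHook l s t j = s + j := by
  simp [columnHook, Nat.mod_eq_of_lt hj, Nat.div_eq_of_lt hj]

theorem tendsto_columnHook {l t : ℕ} (hl : l ≠ 0) (ht : t ≠ 0) (s : ℕ) :
    Tendsto (columnHook l s t) atTop atTop :=
  tendsto_atTop_mono (fun _ ↦ (Nat.le_mul_of_pos_left _ (Nat.pos_of_ne_zero ht)).trans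
    (Nat.le_add_left _ _)) (Nat.tendsto_div_const_atTop hl)

theorem FstTerm_one (l s t : ℕ) (z : FstIndex l 1) :
    FstTerm l 1 s t z = ∏ k ∈ range (l + 1), ((columnHook l s t (z.1 + k) : ℝ))⁻¹ := by
  obtain ⟨i, S, hS⟩ := z
  rw [Nat.cast_one, LPath_of_fst_eq (by omega), Set.mem_singleton_iff] at hS
  subst hS
  unfold FstTerm
  dsimp only
  rw [show (1 : ℤ) - i = l + 1 - i - l by ring, finprod_mem_singleton_prod_Icc]
  refine prod_congr rfl fun k _ ↦ ?_
  rw [show (l : ℤ) + 1 - i - k = l + 1 - (i + k : ℕ) by push_cast; ring, Nat.cast_one,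
    hst_one_column]
  norm_cast

instance (l i : ℕ) : Unique (LPath (1, (l : ℤ) + 1 - i) (((1 : ℕ) : ℤ), 1 - i)) := by
  rw [Nat.cast_one, LPath_of_fst_eq (by omega)]
  exact Set.uniqueSingleton _

/-- The `m = 1` case of `F_{(ℓ,m;s,t)}`: `F_{(ℓ,1;s,t)} = 1/(t · s(s+1)⋯(s+ℓ−1))`. -/
theorem Fst_m_eq_one (l s t : ℕ) (hl : 1 ≤ l) (hs : 1 ≤ s) (ht : 1 ≤ t) :
    Fst l 1 s t = ((t : ℝ) * ∏ u ∈ Finset.range l, ((s : ℝ) + (u : ℝ)))⁻¹ := by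
  have hl₀ : l ≠ 0 := Nat.one_le_iff_ne_zero.mp hl
  have hsum := hasSum_prod_range_succ_inv (g := fun j ↦ (columnHook l s t j : ℝ)) (l := l) (t := t)
    (fun j ↦ by simp only [columnHook]; positivity)
    (fun j ↦ by rw [columnHook_add_self hl₀, Nat.cast_add])
    (by positivity) (tendsto_natCast_atTop_atTop.comp (tendsto_columnHook hl₀ (by omega) s))
  have hinit : ∏ k ∈ range l, (columnHook l s t k : ℝ) = ∏ u ∈ range l, ((s : ℝ) + u) :=
    prod_congr rfl fun k hk ↦ by rw [columnHook_of_lt s t (mem_range.mp hk), Nat.cast_add]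
  let e : FstIndex l 1 ≃ ℕ := Equiv.sigmaUnique ℕ _
  rw [Fst, ← hinit, ← hsum.tsum_eq, ← e.tsum_eq]
  exact tsum_congr (FstTerm_one l s t)
end
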